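/- arXiv:2005.05569 — 10 statements merged into one kernel-verified Lean document; each statement's English description precedes it below -/
import Mathlib

section
/- The distance function on equivalence classes of divisors satisfies the triangle inequality: if D, D', D'' are pairwise equivalent divisors, then dist(D,D'') ≤ dist(D,D') + dist(D',D''). -/
open Finset

namespace Gonality

variable {V : Type*}

/-- Laplacian matrix of a multigraph given by edge multiplicities `E`. -/
def lap [Fintype V] [DecidableEq V] (E : V → V → ℕ) : Matrix V V ℤ :=
  Matrix.of fun u v => if u = v then (∑ w, (E u w : ℤ)) else -(E u v : ℤ)

/-- Connectivity of the multigraph with edge multiplicities `E`. -/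
def MGConnected (E : V → V → ℕ) : Prop :=
  ∀ u v : V, Relation.ReflTransGen (fun a b => 0 < E a b) u v

/-- Indicator vector of a set of vertices. -/
def ind [DecidableEq V] (U : Finset V) : V → ℤ := fun v => if v ∈ U then 1 else 0

/-- Number of edges from `v` to the complement of `U`. -/
def outdeg [Fintype V] [DecidableEq V] (E : V → V → ℕ) (U : Finset V) (v : V) : ℤ :=
  ∑ u ∈ Uᶜ, (E v u : ℤ)

/-- `U` can be fired from the divisor `D`. -/
def Fireable [Fintype V] [DecidableEq V] (E : V → V → ℕ) (D : V → ℤ) (U : Finset V) : Prop :=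
  ∀ v ∈ U, outdeg E U v ≤ D v

/-- Maximum entry of an integer vector. -/
def vmax [Fintype V] [Nonempty V] (x : V → ℤ) : ℤ :=
  Finset.univ.sup' Finset.univ_nonempty x


lemma lap_mulVec_apply [Fintype V] [DecidableEq V]
    (E : V → V → ℕ) (hloop : ∀ v, E v v = 0) (w : V → ℤ) (a : V) :
    (lap E).mulVec w a = ∑ v, (E a v : ℤ) * (w a - w v) := by
  simp only [Matrix.mulVec, dotProduct, lap, Matrix.of_apply, mul_sub,
    Finset.sum_sub_distrib, ← Finset.sum_mul]
  have : ∀ v ∈ (Finset.univ : Finset V),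
      (if a = v then (∑ u, (E a u : ℤ)) else -(E a v : ℤ)) * w v
        = (if a = v then (∑ u, (E a u : ℤ)) * w a else 0) - (E a v : ℤ) * w v := by
    intro v _
    by_cases h : a = v
    · subst h; simp [hloop a]
    · simp [h]
  rw [Finset.sum_congr rfl this, Finset.sum_sub_distrib,
    Finset.sum_ite_eq (Finset.univ : Finset V) a]
  simp

lemma ker_const [Fintype V] [DecidableEq V] [Nonempty V]
    (E : V → V → ℕ) (hloop : ∀ v, E v v = 0) (hconn : MGConnected E)
    (w : V → ℤ) (hw : (lap E).mulVec w = 0) (u v : V) : w u = w v := by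
  obtain ⟨a₀, -, ha₀⟩ := Finset.exists_mem_eq_sup' (Finset.univ_nonempty (α := V)) w
  have key : ∀ a, w a = vmax w → ∀ b, 0 < E a b → w b = vmax w := by
    intro a ha b hb
    have h0 : ∑ v, (E a v : ℤ) * (w a - w v) = 0 := by
      rw [← lap_mulVec_apply E hloop, hw]; rfl
    have hnn : ∀ v ∈ (Finset.univ : Finset V), 0 ≤ (E a v : ℤ) * (w a - w v) := by
      intro v _
      have : w v ≤ vmax w := Finset.le_sup' w (Finset.mem_univ v)
      have := sub_nonneg.mpr (ha ▸ this)
      positivity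
    have hall := (Finset.sum_eq_zero_iff_of_nonneg hnn).mp h0
    have hb' := hall b (Finset.mem_univ b)
    have hEb : (0 : ℤ) < (E a b : ℤ) := by exact_mod_cast hb
    have : w a - w b = 0 := by
      rcases mul_eq_zero.mp hb' with h | h
      · exact absurd h (by exact_mod_cast hb.ne')
      · exact h
    linarith [ha]
  have hmax : ∀ c, w c = vmax w := by
    intro c
    have := hconn a₀ c
    induction this with
    | refl => exact ha₀.symm
    | tail _ hbc ih => exact key _ ih _ hbc
  rw [hmax u, hmax v]

/-- the distance on equivalent divisors satisfies the triangle
inequality `dist(D,D'') ≤ dist(D,D') + dist(D',D'')`. -/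
theorem dist_triangle [Fintype V] [DecidableEq V] [Nonempty V]
    (E : V → V → ℕ) (hsym : ∀ u v, E u v = E v u) (hloop : ∀ v, E v v = 0)
    (hconn : MGConnected E)
    (D D' D'' : V → ℤ) (x y z : V → ℤ)
    (hx : D' = D - (lap E).mulVec x) (hx0 : 0 ≤ x) (hxz : ∃ v, x v = 0)
    (hy : D'' = D' - (lap E).mulVec y) (hy0 : 0 ≤ y) (hyz : ∃ v, y v = 0)
    (hz : D'' = D - (lap E).mulVec z) (hz0 : 0 ≤ z) (hzz : ∃ v, z v = 0) :
    vmax z ≤ vmax x + vmax y := by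
  obtain ⟨v₀, hv₀⟩ := hzz
  have hker : (lap E).mulVec (x + y - z) = 0 := by
    have h1 : (lap E).mulVec x + (lap E).mulVec y = (lap E).mulVec z := by
      have : D - (lap E).mulVec z = D - (lap E).mulVec x - (lap E).mulVec y := by
        rw [← hz, hy, hx]
      funext a
      have := congrFun this a
      simp only [Pi.sub_apply, Pi.add_apply] at this ⊢
      linarith
    rw [Matrix.mulVec_sub, Matrix.mulVec_add, h1, sub_self]
  have hconstv : ∀ u : V, x u + y u - z u = x v₀ + y v₀ := by
    intro u
    have := ker_const E hloop hconn (x + y - z) hker u v₀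
    simp only [Pi.add_apply, Pi.sub_apply, hv₀] at this
    linarith
  have hc0 : 0 ≤ x v₀ + y v₀ := add_nonneg (hx0 v₀) (hy0 v₀)
  have hzle : ∀ u, z u ≤ vmax x + vmax y := by
    intro u
    have h1 : x u ≤ vmax x := Finset.le_sup' x (Finset.mem_univ u)
    have h2 : y u ≤ vmax y := Finset.le_sup' y (Finset.mem_univ u)
    have := hconstv u
    linarith
  exact Finset.sup'_le _ _ fun u _ => hzle u
end Gonality
end

section
/- Let D and D' be equivalent effective divisors on a connected graph G. Then there is an increasing chain ∅ ⊊ U_1 ⊆ U_2 ⊆ ⋯ ⊆ U_t ⊊ V of vertex subsets such that, setting D_0 = D and D_i = D_{i-1} - Q·1_{U_i}, every intermediate divisor D_i is effective and D_t = D'. Moreover t = dist(D,D'). -/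
open Finset

namespace Gonality

variable {V : Type*}

lemma lap_mulVec [Fintype V] [DecidableEq V] (E : V → V → ℕ) (hloop : ∀ v, E v v = 0)
    (y : V → ℤ) (v : V) :
    (lap E).mulVec y v = ∑ u, (E v u : ℤ) * (y v - y u) := by
  simp only [Matrix.mulVec, dotProduct, lap, Matrix.of_apply]
  have h1 : ∀ u, (if v = u then (∑ w, (E v w : ℤ)) else -(E v u : ℤ)) * y u
      = (if v = u then (∑ w, (E v w : ℤ)) + (E v u : ℤ) else 0) * y u - (E v u : ℤ) * y u := by
    intro u; by_cases h : v = u <;> simp [h] <;> ring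
  rw [Finset.sum_congr rfl fun u _ => h1 u, Finset.sum_sub_distrib]
  simp only [ite_mul, zero_mul]
  rw [Finset.sum_ite_eq]
  simp only [Finset.mem_univ, if_true, hloop v, Nat.cast_zero, add_zero]
  rw [Finset.sum_mul]
  rw [← Finset.sum_sub_distrib]
  exact Finset.sum_congr rfl fun u _ => by ring

/-- equivalent effective divisors are connected by firing an
increasing chain `∅ ⊊ U_1 ⊆ ⋯ ⊆ U_t ⊊ V` with all intermediate divisors
effective, where `t = dist(D,D')`. -/
theorem chain_of_firings [Fintype V] [DecidableEq V] [Nonempty V]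
    (E : V → V → ℕ) (hsym : ∀ u v, E u v = E v u) (hloop : ∀ v, E v v = 0)
    (hconn : MGConnected E)
    (D D' : V → ℤ) (hD : 0 ≤ D) (hD' : 0 ≤ D')
    (x : V → ℤ) (hx : D' = D - (lap E).mulVec x) (hx0 : 0 ≤ x) (hxz : ∃ v, x v = 0) :
    ∃ (t : ℕ) (U : Fin t → Finset V),
      (t : ℤ) = vmax x ∧
      (∀ i, (U i).Nonempty) ∧
      (∀ i j, i ≤ j → U i ⊆ U j) ∧
      (∀ i, U i ≠ Finset.univ) ∧
      ∀ Dseq : ℕ → V → ℤ, Dseq 0 = D →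
        (∀ i : Fin t, Dseq (i + 1) = Dseq i - (lap E).mulVec (ind (U i))) →
        (∀ i : ℕ, i ≤ t → 0 ≤ Dseq i) ∧ Dseq t = D' := by
  obtain ⟨v0, hv0⟩ := hxz
  set M : ℤ := vmax x with hM
  have hle : ∀ v, x v ≤ M := fun v => Finset.le_sup' x (Finset.mem_univ v)
  obtain ⟨vm, -, hvm⟩ := Finset.exists_mem_eq_sup' (Finset.univ_nonempty (α := V)) x
  have hM0 : 0 ≤ M := hv0 ▸ hle v0
  set t : ℕ := M.toNat with htdef
  have ht : (t : ℤ) = M := Int.toNat_of_nonneg hM0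
  refine ⟨t, fun i => Finset.univ.filter (fun v => (t : ℤ) - (i : ℤ) ≤ x v), ht, ?_, ?_, ?_, ?_⟩
  · intro i
    refine ⟨vm, Finset.mem_filter.mpr ⟨Finset.mem_univ _, ?_⟩⟩
    have h1 : (0:ℤ) ≤ (i : ℤ) := Int.ofNat_nonneg _
    have h2 : M = x vm := hvm
    omega
  · intro i j hij v hv
    have h1 : (i : ℕ) ≤ (j : ℕ) := hij
    have h2 : (i : ℤ) ≤ (j : ℤ) := by exact_mod_cast h1
    simp only [Finset.mem_filter, Finset.mem_univ, true_and] at hv ⊢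
    omega
  · intro i h
    have hv0mem : v0 ∈ Finset.univ.filter (fun v => (t : ℤ) - (i : ℤ) ≤ x v) :=
      Finset.eq_univ_iff_forall.mp h v0
    have := (Finset.mem_filter.mp hv0mem).2
    have hi : (i : ℤ) < (t : ℤ) := by exact_mod_cast i.isLt
    omega
  · intro Dseq h0 hrec
    set y : ℕ → V → ℤ := fun k v => (x v - ((t : ℤ) - k)) ⊔ 0 with hy
    have hy0 : ∀ k v, 0 ≤ y k v := fun k v => le_max_right _ _
    have hyt : y t = x := by
      funext v
      simp only [hy, sub_self, sub_zero]
      exact max_eq_left (hx0 v)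
    have hseq : ∀ k, k ≤ t → Dseq k = D - (lap E).mulVec (y k) := by
      intro k
      induction k with
      | zero =>
        intro _
        have : y 0 = 0 := by
          funext v
          simp only [hy, Nat.cast_zero, sub_zero]
          have := hle v
          have := ht
          exact max_eq_right (by omega)
        rw [this, h0]
        simp [Matrix.mulVec_zero]
      | succ k ih =>
        intro hk
        have hk' : k < t := hk
        have hrw : y (k + 1) = y k + ind (Finset.univ.filter (fun v => (t : ℤ) - ((⟨k, hk'⟩ : Fin t) : ℤ) ≤ x v)) := by
          funext v
          simp only [hy, ind, Pi.add_apply, Finset.mem_filter, Finset.mem_univ, true_and]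
          push_cast
          by_cases h : (t : ℤ) - k ≤ x v
          · rw [if_pos h]
            rw [max_eq_left (by omega), max_eq_left (by omega)]
            ring
          · rw [if_neg h]
            rw [max_eq_right (by omega), max_eq_right (by omega)]
            ring
        have := hrec ⟨k, hk'⟩
        simp only [Fin.val_mk] at this
        rw [this, ih (le_of_lt hk'), hrw, Matrix.mulVec_add]
        abel
    have heff : ∀ k, k ≤ t → 0 ≤ D - (lap E).mulVec (y k) := by
      intro k hk v
      have hc : (0:ℤ) ≤ (t : ℤ) - k := by
        have : (k:ℤ) ≤ (t:ℤ) := by exact_mod_cast hk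
        omega
      set c : ℤ := (t : ℤ) - k with hcdef
      simp only [Pi.zero_apply, Pi.sub_apply]
      rw [lap_mulVec E hloop]
      by_cases hxv : x v ≤ c
      · have hyv : y k v = 0 := max_eq_right (by omega)
        have hsum : (∑ u, (E v u : ℤ) * (y k v - y k u)) ≤ 0 := by
          apply Finset.sum_nonpos
          intro u _
          apply mul_nonpos_of_nonneg_of_nonpos (by positivity)
          rw [hyv]
          have := hy0 k u
          omega
        have := hD v
        simp only [Pi.zero_apply] at this
        omega
      · push_neg at hxv
        have hvlap : (∑ u, (E v u : ℤ) * (y k v - y k u)) ≤ ∑ u, (E v u : ℤ) * (x v - x u) := by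
          apply Finset.sum_le_sum
          intro u _
          apply mul_le_mul_of_nonneg_left _ (by positivity)
          have h1 : y k v = x v - c := max_eq_left (by omega)
          have h2 : x u - c ≤ y k u := le_max_left _ _
          omega
        have hDx : D' v = D v - (lap E).mulVec x v := by rw [hx]; rfl
        rw [lap_mulVec E hloop] at hDx
        have := hD' v
        simp only [Pi.zero_apply] at this
        omega
    constructor
    · intro i hi
      rw [hseq i hi]
      exact heff i hi
    · rw [hseq t le_rfl, hyt, hx]

end Gonality
end

section
/- If D and D' are equivalent effective divisors on a connected graph G, then dist(D,D') ≤ deg(D)·|V|. -/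
open Finset

namespace Gonality

variable {V : Type*}

lemma sum_lap [Fintype V] [DecidableEq V] (E : V → V → ℕ) (hsym : ∀ u v, E u v = E v u)
    (hloop : ∀ v, E v v = 0) (y : V → ℤ) (S : Finset V) :
    ∑ v ∈ S, (lap E).mulVec y v = ∑ v ∈ S, ∑ u ∈ Sᶜ, (E v u : ℤ) * (y v - y u) := by
  have h0 : ∑ v ∈ S, ∑ u ∈ S, (E v u : ℤ) * (y v - y u) = 0 := by
    have h := Finset.sum_comm (s := S) (t := S) (f := fun v u => (E v u : ℤ) * (y v - y u))
    have h2 : ∑ v ∈ S, ∑ u ∈ S, (E u v : ℤ) * (y u - y v)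
        = -∑ v ∈ S, ∑ u ∈ S, (E v u : ℤ) * (y v - y u) := by
      rw [← Finset.sum_neg_distrib]
      refine Finset.sum_congr rfl fun v _ => ?_
      rw [← Finset.sum_neg_distrib]
      refine Finset.sum_congr rfl fun u _ => ?_
      rw [hsym u v]; ring
    omega
  calc ∑ v ∈ S, (lap E).mulVec y v
      = ∑ v ∈ S, ∑ u, (E v u : ℤ) * (y v - y u) := by
        exact Finset.sum_congr rfl fun v _ => lap_mulVec E hloop y v
    _ = ∑ v ∈ S, (∑ u ∈ S, (E v u : ℤ) * (y v - y u) + ∑ u ∈ Sᶜ, (E v u : ℤ) * (y v - y u)) := by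
        refine Finset.sum_congr rfl fun v _ => ?_
        rw [Finset.sum_add_sum_compl]
    _ = _ := by rw [Finset.sum_add_distrib, h0, zero_add]

lemma trunc_le [Fintype V] [DecidableEq V] (E : V → V → ℕ) (hloop : ∀ v, E v v = 0)
    (D D' x : V → ℤ) (hD : 0 ≤ D) (hD' : 0 ≤ D') (hx : D' = D - (lap E).mulVec x)
    (k : ℤ) (v : V) :
    (lap E).mulVec (fun u => max (x u - k) 0) v ≤ D v := by
  have hQx : (lap E).mulVec x v = D v - D' v := by
    have := congrFun hx v
    simp [Pi.sub_apply] at this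
    omega
  rw [lap_mulVec E hloop]
  by_cases h : x v ≤ k
  · have hle : ∑ u, (E v u : ℤ) * (max (x v - k) 0 - max (x u - k) 0) ≤ 0 := by
      apply Finset.sum_nonpos
      intro u _
      have h1 : max (x v - k) 0 = 0 := by omega
      have h2 : (0:ℤ) ≤ max (x u - k) 0 := le_max_right _ _
      have : max (x v - k) 0 - max (x u - k) 0 ≤ 0 := by omega
      exact mul_nonpos_of_nonneg_of_nonpos (by positivity) this
    have : 0 ≤ D v := by have := hD v; simpa using this
    omega
  · have hle : ∑ u, (E v u : ℤ) * (max (x v - k) 0 - max (x u - k) 0)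
        ≤ ∑ u, (E v u : ℤ) * (x v - x u) := by
      apply Finset.sum_le_sum
      intro u _
      apply mul_le_mul_of_nonneg_left _ (by positivity)
      have h1 : max (x v - k) 0 = x v - k := by omega
      have h2 : x u - k ≤ max (x u - k) 0 := le_max_left _ _
      omega
    rw [← lap_mulVec E hloop, hQx] at hle
    have h3 : 0 ≤ D' v := by have := hD' v; simpa using this
    omega


/-- for equivalent effective divisors, `dist(D,D') ≤ deg(D)·|V|`. -/
theorem dist_le_deg_mul_card [Fintype V] [DecidableEq V] [Nonempty V]
    (E : V → V → ℕ) (hsym : ∀ u v, E u v = E v u) (hloop : ∀ v, E v v = 0)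
    (hconn : MGConnected E)
    (D D' : V → ℤ) (hD : 0 ≤ D) (hD' : 0 ≤ D')
    (x : V → ℤ) (hx : D' = D - (lap E).mulVec x) (hx0 : 0 ≤ x) (hxz : ∃ v, x v = 0) :
    vmax x ≤ (∑ v, D v) * Fintype.card V := by
  classical
  set d := ∑ v, D v with hd
  have hDv : ∀ v, 0 ≤ D v := fun v => by have := hD v; simpa using this
  have hd0 : 0 ≤ d := Finset.sum_nonneg fun v _ => hDv v
  obtain ⟨vm, -, hvm⟩ := Finset.exists_mem_eq_sup' (Finset.univ_nonempty (α := V)) x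
  set m := vmax x with hm
  have hvm' : x vm = m := hvm.symm
  obtain ⟨v0, hv0⟩ := hxz
  rcases le_or_gt m 0 with hm0 | hm1
  · exact hm0.trans (mul_nonneg hd0 (by positivity))
  set U : ℤ → Finset V := fun k => Finset.univ.filter (fun v => k ≤ x v) with hU
  have hmem : ∀ k v, v ∈ U k ↔ k ≤ x v := by intro k v; simp [hU]
  have hUmono : ∀ {j k : ℤ}, j ≤ k → U k ⊆ U j := by
    intro j k hjk v hv
    rw [hmem] at hv ⊢; omega
  -- key fiber bound
  have key : ∀ k ∈ Finset.Icc (1:ℤ) m,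
      ((((Finset.Icc (1:ℤ) m)).filter (fun j => U j = U k)).card : ℤ) ≤ d := by
    intro k hk
    rw [Finset.mem_Icc] at hk
    set S := U k with hS
    set F := (Finset.Icc (1:ℤ) m).filter (fun j => U j = S) with hF
    have hkF : k ∈ F := by
      rw [hF, Finset.mem_filter, Finset.mem_Icc]; exact ⟨hk, rfl⟩
    have hFne : F.Nonempty := ⟨k, hkF⟩
    set a := F.min' hFne with ha
    set b := F.max' hFne with hb
    have haF : a ∈ F := F.min'_mem hFne
    have hbF : b ∈ F := F.max'_mem hFne
    have hab : a ≤ b := F.min'_le b hbF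
    obtain ⟨haI, hUa⟩ := Finset.mem_filter.mp haF
    obtain ⟨hbI, hUb⟩ := Finset.mem_filter.mp hbF
    rw [Finset.mem_Icc] at haI hbI
    -- F is an interval
    have hFI : F = Finset.Icc a b := by
      apply Finset.Subset.antisymm
      · intro j hj
        rw [Finset.mem_Icc]
        exact ⟨F.min'_le j hj, F.le_max' j hj⟩
      · intro j hj
        rw [Finset.mem_Icc] at hj
        rw [hF, Finset.mem_filter, Finset.mem_Icc]
        refine ⟨⟨by omega, by omega⟩, ?_⟩
        refine Finset.Subset.antisymm ?_ ?_
        · exact hUa ▸ hUmono hj.1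
        · exact hUb ▸ hUmono hj.2
    have hcardF : (F.card : ℤ) = b + 1 - a := by
      rw [hFI, Int.card_Icc]; omega
    -- membership characterizations of S
    have hSb : ∀ v, v ∈ S ↔ b ≤ x v := fun v => by rw [← hUb]; exact hmem b v
    have hSa : ∀ v, v ∉ S → x v ≤ a - 1 := by
      intro v hv
      rw [← hUa, hmem] at hv; omega
    have hvmS : vm ∈ S := by rw [hSb]; omega
    have hv0S : v0 ∉ S := by rw [hSb]; omega
    -- crossing edge and c ≥ 1
    set c : ℤ := ∑ v ∈ S, ∑ u ∈ Sᶜ, (E v u : ℤ) with hc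
    have hcross : ∃ p ∈ S, ∃ q ∈ Sᶜ, 0 < E p q := by
      have gen : ∀ u w : V, Relation.ReflTransGen (fun p q => 0 < E p q) u w →
          u ∈ S → w ∉ S → ∃ p ∈ S, ∃ q ∈ Sᶜ, 0 < E p q := by
        intro u w h
        induction h with
        | refl => intro h1 h2; exact absurd h1 h2
        | @tail p q hup hpq ih =>
          intro hu hw
          by_cases hpS : p ∈ S
          · exact ⟨p, hpS, q, Finset.mem_compl.mpr hw, hpq⟩
          · exact ih hu hpS
      exact gen vm v0 (hconn vm v0) hvmS hv0S
    obtain ⟨p, hp, q, hq, hpq⟩ := hcross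
    have hc1 : 1 ≤ c := by
      have e1 : (E p q : ℤ) ≤ ∑ u ∈ Sᶜ, (E p u : ℤ) :=
        Finset.single_le_sum (f := fun u => (E p u : ℤ)) (fun u _ => by positivity) hq
      have e2 : ∑ u ∈ Sᶜ, (E p u : ℤ) ≤ c :=
        Finset.single_le_sum (f := fun v => ∑ u ∈ Sᶜ, (E v u : ℤ))
          (fun v _ => Finset.sum_nonneg fun u _ => by positivity) hp
      omega
    -- the two truncations
    set t : ℤ := b + 1 - a with htdef
    set z1 : V → ℤ := fun v => max (x v - (a - 1)) 0 with hz1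
    set z2 : V → ℤ := fun v => max (x v - b) 0 with hz2
    have hz12 : z1 = z2 + t • ind S := by
      funext v
      simp only [Pi.add_apply, Pi.smul_apply, smul_eq_mul, hz1, hz2, ind]
      by_cases hv : v ∈ S
      · have := (hSb v).mp hv
        simp only [hv, if_true]
        omega
      · have := hSa v hv
        simp only [hv, if_false]
        omega
    have hlin : ∑ v ∈ S, (lap E).mulVec z1 v
        = ∑ v ∈ S, (lap E).mulVec z2 v + t * ∑ v ∈ S, (lap E).mulVec (ind S) v := by
      rw [hz12]
      simp only [Matrix.mulVec_add, Matrix.mulVec_smul, Pi.add_apply, Pi.smul_apply,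
        smul_eq_mul, Finset.sum_add_distrib, Finset.mul_sum]
    have h1 : ∑ v ∈ S, (lap E).mulVec z1 v ≤ d := by
      calc ∑ v ∈ S, (lap E).mulVec z1 v ≤ ∑ v ∈ S, D v :=
            Finset.sum_le_sum fun v _ => trunc_le E hloop D D' x hD hD' hx (a - 1) v
        _ ≤ d := Finset.sum_le_sum_of_subset_of_nonneg (Finset.subset_univ S)
            (fun v _ _ => hDv v)
    have h2 : 0 ≤ ∑ v ∈ S, (lap E).mulVec z2 v := by
      rw [sum_lap E hsym hloop]
      refine Finset.sum_nonneg fun v hv => Finset.sum_nonneg fun u hu => ?_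
      have hvb : b ≤ x v := (hSb v).mp hv
      have hua : x u ≤ a - 1 := hSa u (Finset.mem_compl.mp hu)
      have : 0 ≤ z2 v - z2 u := by simp only [hz2]; omega
      exact mul_nonneg (by positivity) this
    have h3 : ∑ v ∈ S, (lap E).mulVec (ind S) v = c := by
      rw [sum_lap E hsym hloop, hc]
      refine Finset.sum_congr rfl fun v hv => Finset.sum_congr rfl fun u hu => ?_
      have h4 : ind S v = 1 := by simp [ind, hv]
      have h5 : ind S u = 0 := by simp [ind, Finset.mem_compl.mp hu]
      rw [h4, h5]; ring
    rw [h3] at hlin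
    have ht : t * c ≤ d := by linarith
    have htd : t ≤ d := by nlinarith
    omega
  -- counting
  set img := (Finset.Icc (1:ℤ) m).image U with himgdef
  have himg : img.card ≤ Fintype.card V := by
    have hinj : Set.InjOn Finset.card (img : Set (Finset V)) := by
      intro S hS T hT hcard
      simp only [himgdef, Finset.coe_image, Set.mem_image, Finset.mem_coe] at hS hT
      obtain ⟨j, hj, rfl⟩ := hS
      obtain ⟨k, hk, rfl⟩ := hT
      rcases le_total j k with hjk | hjk
      · exact (Finset.eq_of_subset_of_card_le (hUmono hjk) (le_of_eq hcard)).symm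
      · exact Finset.eq_of_subset_of_card_le (hUmono hjk) (le_of_eq hcard.symm)
    have h1 : img.card = (img.image Finset.card).card :=
      (Finset.card_image_of_injOn hinj).symm
    have h2 : img.image Finset.card ⊆ Finset.Icc 1 (Fintype.card V) := by
      intro n hn
      obtain ⟨S, hS, rfl⟩ := Finset.mem_image.mp hn
      obtain ⟨j, hj, rfl⟩ := Finset.mem_image.mp hS
      rw [Finset.mem_Icc] at hj
      rw [Finset.mem_Icc]
      constructor
      · have : vm ∈ U j := by rw [hmem]; omega
        exact Finset.card_pos.mpr ⟨vm, this⟩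
      · exact Finset.card_le_card (Finset.subset_univ _)
    calc img.card = (img.image Finset.card).card := h1
      _ ≤ (Finset.Icc 1 (Fintype.card V)).card := Finset.card_le_card h2
      _ = Fintype.card V := by rw [Nat.card_Icc]; omega
  have hcount := Finset.card_eq_sum_card_image U (Finset.Icc (1:ℤ) m)
  have hmcard : ((Finset.Icc (1:ℤ) m).card : ℤ) = m := by
    rw [Int.card_Icc]; omega
  calc m = ((Finset.Icc (1:ℤ) m).card : ℤ) := hmcard.symm
    _ = ∑ S ∈ img, (((Finset.Icc (1:ℤ) m).filter (fun j => U j = S)).card : ℤ) := by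
        rw [hcount]; push_cast; rfl
    _ ≤ ∑ _S ∈ img, d := by
        refine Finset.sum_le_sum fun S hS => ?_
        obtain ⟨k, hk, rfl⟩ := Finset.mem_image.mp hS
        exact key k hk
    _ = img.card * d := by rw [Finset.sum_const, nsmul_eq_mul]
    _ ≤ (Fintype.card V : ℤ) * d := by
        have := himg
        exact mul_le_mul_of_nonneg_right (by exact_mod_cast this) hd0
    _ = d * Fintype.card V := mul_comm _ _
end Gonality
end

section
/- Dhar's burning algorithm is correct: given an effective divisor D and a vertex q, the algorithm that starts with U = V∖{q} and repeatedly removes any vertex v ∈ U with outdeg_U(v) > D(v) terminates with the unique inclusionwise maximal subset U ⊆ V∖{q} that can be fired (possibly U = ∅); in particular the output does not depend on the order of removals. -/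
open Finset

namespace Gonality

variable {V : Type*}

/-- Dhar's burning algorithm is correct.  Any run of the algorithm
(start with `V ∖ {q}`, repeatedly remove a vertex violating
`outdeg_U(v) ≤ D(v)`, stop when none remain) stabilizes, and its output is the
unique inclusionwise maximal fireable subset of `V ∖ {q}`; in particular the
output does not depend on the order of removals. -/
theorem dhar_correct [Fintype V] [DecidableEq V]
    (E : V → V → ℕ) (hsym : ∀ u v, E u v = E v u) (hloop : ∀ v, E v v = 0)
    (D : V → ℤ) (hD : 0 ≤ D) (q : V)
    (U : ℕ → Finset V) (h0 : U 0 = Finset.univ \ {q})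
    (hstep : ∀ n, (∃ v ∈ U n, D v < outdeg E (U n) v) →
      ∃ v ∈ U n, D v < outdeg E (U n) v ∧ U (n + 1) = U n \ {v})
    (hstop : ∀ n, (∀ v ∈ U n, outdeg E (U n) v ≤ D v) → U (n + 1) = U n) :
    ∃ N, ∀ n, N ≤ n →
      q ∉ U n ∧ Fireable E D (U n) ∧
        ∀ W : Finset V, q ∉ W → Fireable E D W → W ⊆ U n := by
  classical
  -- outdeg monotonicity
  have hmono : ∀ (W A : Finset V), W ⊆ A → ∀ v, outdeg E A v ≤ outdeg E W v := by
    intro W A hWA v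
    apply Finset.sum_le_sum_of_subset_of_nonneg
    · intro u hu
      simp only [Finset.mem_compl] at hu ⊢
      exact fun h => hu (hWA h)
    · intro u _ _; positivity
  -- fireable sets avoiding q stay inside every U n
  have hW : ∀ (W : Finset V), q ∉ W → Fireable E D W → ∀ n, W ⊆ U n := by
    intro W hq hF n
    induction n with
    | zero =>
      rw [h0]; intro w hw
      simp only [Finset.mem_sdiff, Finset.mem_univ, Finset.mem_singleton, true_and]
      exact fun h => hq (h ▸ hw)
    | succ n ih =>
      by_cases h : ∃ v ∈ U n, D v < outdeg E (U n) v
      · obtain ⟨v, hv, hlt, heq⟩ := hstep n h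
        rw [heq]
        intro w hw
        rw [Finset.mem_sdiff, Finset.mem_singleton]
        refine ⟨ih hw, fun hwv => ?_⟩
        subst hwv
        exact absurd (le_trans (hmono W (U n) ih w) (hF w hw)) (not_le.mpr hlt)
      · push_neg at h
        rw [hstop n h]; exact ih
  -- subsequent sets are subsets
  have hsub : ∀ n, U (n + 1) ⊆ U n := by
    intro n
    by_cases h : ∃ v ∈ U n, D v < outdeg E (U n) v
    · obtain ⟨v, hv, hlt, heq⟩ := hstep n h
      rw [heq]; exact Finset.sdiff_subset
    · push_neg at h; rw [hstop n h]
  have hchain : ∀ m n, m ≤ n → U n ⊆ U m := by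
    intro m n h
    induction n with
    | zero => simp_all
    | succ n ih =>
      rcases Nat.lt_or_ge m (n+1) with h' | h'
      · exact (hsub n).trans (ih (Nat.lt_succ_iff.mp h'))
      · have : m = n + 1 := le_antisymm h h'
        subst this; rfl
  -- eventually fireable
  have hfire : ∃ N, Fireable E D (U N) := by
    by_contra hc
    push_neg at hc
    have hdec : ∀ n, (U (n+1)).card < (U n).card := by
      intro n
      have := hc n
      unfold Fireable at this
      push_neg at this
      obtain ⟨v, hv, hlt⟩ := this
      obtain ⟨w, hw, _, heq⟩ := hstep n ⟨v, hv, hlt⟩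
      rw [heq]
      exact Finset.card_lt_card (Finset.sdiff_ssubset (Finset.singleton_subset_iff.mpr hw)
        (Finset.singleton_nonempty w))
    have hle : ∀ n, (U n).card + n ≤ (U 0).card := by
      intro n
      induction n with
      | zero => simp
      | succ n ih => have := hdec n; omega
    have := hle ((U 0).card + 1)
    omega
  obtain ⟨N, hN⟩ := hfire
  have hconst : ∀ n, N ≤ n → U n = U N := by
    intro n h
    induction n with
    | zero => simp_all
    | succ n ih =>
      rcases Nat.lt_or_ge N (n+1) with h' | h'
      · have hn := ih (Nat.lt_succ_iff.mp h')
        rw [← hn] at hN ⊢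
        exact hstop n hN
      · exact (le_antisymm h h') ▸ rfl
  refine ⟨N, fun n hn => ?_⟩
  rw [hconst n hn]
  refine ⟨?_, hN, fun W hq hF => hW W hq hF N⟩
  have := hchain 0 N (Nat.zero_le N)
  rw [h0] at this
  intro hqU
  have := this hqU
  simp at this
end Gonality
end

section
/- Every subset W ⊆ V∖{q} that can be fired from an effective divisor D is contained in the output of Dhar's burning algorithm applied to D and q. -/
open Finset

namespace Gonality

variable {V : Type*}

/-- every fireable subset of `V ∖ {q}` is contained in (every
intermediate set, and hence in the output of) Dhar's burning algorithm. -/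
theorem fireable_subset_dhar [Fintype V] [DecidableEq V]
    (E : V → V → ℕ) (hsym : ∀ u v, E u v = E v u) (hloop : ∀ v, E v v = 0)
    (D : V → ℤ) (hD : 0 ≤ D) (q : V)
    (U : ℕ → Finset V) (h0 : U 0 = Finset.univ \ {q})
    (hstep : ∀ n, (∃ v ∈ U n, D v < outdeg E (U n) v) →
      ∃ v ∈ U n, D v < outdeg E (U n) v ∧ U (n + 1) = U n \ {v})
    (hstop : ∀ n, (∀ v ∈ U n, outdeg E (U n) v ≤ D v) → U (n + 1) = U n)
    (W : Finset V) (hWq : q ∉ W) (hW : Fireable E D W) :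
    ∀ n, W ⊆ U n := by
  intro n
  induction n with
  | zero =>
    rw [h0]
    intro w hw
    simp only [Finset.mem_sdiff, Finset.mem_univ, Finset.mem_singleton, true_and]
    exact fun h => hWq (h ▸ hw)
  | succ n ih =>
    by_cases hbad : ∃ v ∈ U n, D v < outdeg E (U n) v
    · obtain ⟨v, hvU, hv, hUn⟩ := hstep n hbad
      rw [hUn]
      intro w hw
      rw [Finset.mem_sdiff, Finset.mem_singleton]
      refine ⟨ih hw, fun hwv => ?_⟩
      subst hwv
      have h1 : outdeg E (U n) w ≤ outdeg E W w := by
        unfold outdeg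
        refine Finset.sum_le_sum_of_subset_of_nonneg ?_ (fun _ _ _ => by positivity)
        intro u hu
        simp only [Finset.mem_compl] at hu ⊢
        exact fun h => hu (ih h)
      exact absurd (h1.trans (hW w hw)) (not_le.mpr hv)
    · rw [hstop n (by push_neg at hbad; exact hbad)]
      exact ih
end Gonality
end

section
/- Let D be an effective divisor on a connected graph G and q a vertex, and let D_q be the q-reduced divisor equivalent to D. Then the unique nonnegative vector x = script(D, D_q) with D_q = D - Qx and min_v x_v = 0 satisfies x_q = 0; consequently D_q(q) ≥ D(q). -/
open Finset

namespace Gonality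

variable {V : Type*}

/-- `script(D, D_q)` vanishes at `q`; consequently
`D_q(q) ≥ D(q)`. -/
theorem script_to_reduced_vanishes_at_q [Fintype V] [DecidableEq V]
    (E : V → V → ℕ) (hsym : ∀ u v, E u v = E v u) (hloop : ∀ v, E v v = 0)
    (hconn : MGConnected E)
    (D Dq : V → ℤ) (hD : 0 ≤ D) (hDq : 0 ≤ Dq) (q : V)
    (hred : ∀ U : Finset V, U.Nonempty → q ∉ U → ¬ 0 ≤ Dq - (lap E).mulVec (ind U))
    (x : V → ℤ)
    (hx : Dq = D - (lap E).mulVec x) (hx0 : 0 ≤ x) (hxz : ∃ v, x v = 0) :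
    x q = 0 ∧ D q ≤ Dq q := by
  have hlap : ∀ (y : V → ℤ) (v : V),
      (lap E).mulVec y v = ∑ u, (E v u : ℤ) * (y v - y u) := by
    intro y v
    have key : ∀ u, (if v = u then (∑ w, (E v w : ℤ)) else -(E v u : ℤ)) * y u
        = (if v = u then (∑ w, (E v w : ℤ)) * y u else 0) - (E v u : ℤ) * y u := by
      intro u
      by_cases h : v = u
      · subst h; simp [hloop v]
      · simp [h]
    have : (lap E).mulVec y v
        = ∑ u, (if v = u then (∑ w, (E v w : ℤ)) else -(E v u : ℤ)) * y u := rfl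
    rw [this]
    simp only [key, Finset.sum_sub_distrib, Finset.sum_ite_eq, Finset.mem_univ, if_true]
    rw [show (∑ u, (E v u : ℤ) * (y v - y u))
        = (∑ u, (E v u : ℤ)) * y v - ∑ u, (E v u : ℤ) * y u by
      rw [Finset.sum_mul, ← Finset.sum_sub_distrib]
      exact Finset.sum_congr rfl (fun u _ => by ring)]
  classical
  obtain ⟨v0, hv0⟩ := hxz
  set U : Finset V := Finset.univ.filter (fun v => x v = 0) with hU
  have hUne : U.Nonempty := ⟨v0, by simp [hU, hv0]⟩
  have hxeq : ∀ v, Dq v = D v - ∑ u, (E v u : ℤ) * (x v - x u) := by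
    intro v
    rw [hx]; simp [hlap x v]
  have hfire : 0 ≤ Dq - (lap E).mulVec (ind U) := by
    intro v
    simp only [Pi.zero_apply, Pi.sub_apply]
    rw [hlap (ind U) v, hxeq v]
    by_cases hv : v ∈ U
    · have hxv : x v = 0 := by simpa [hU] using hv
      have hterm : ∀ u ∈ Finset.univ, (E v u : ℤ) * (x v - x u)
          + (E v u : ℤ) * (ind U v - ind U u) ≤ 0 := by
        intro u _
        have hiv : ind U v = 1 := by simp [ind, hv]
        by_cases hu : u ∈ U
        · have hxu : x u = 0 := by simpa [hU] using hu
          simp [hiv, ind, hu, hv, hxv, hxu]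
        · have hxu : 1 ≤ x u := by
            have h0 : x u ≠ 0 := by simpa [hU] using hu
            have h2 : (0:ℤ) ≤ x u := hx0 u
            omega
          have hiu : ind U u = 0 := by simp [ind, hu]
          rw [hiv, hiu, hxv, ← mul_add]
          have : (0 : ℤ) - x u + (1 - 0) ≤ 0 := by omega
          exact mul_nonpos_of_nonneg_of_nonpos (by positivity) this
      have hsum : ∑ u, ((E v u : ℤ) * (x v - x u) + (E v u : ℤ) * (ind U v - ind U u)) ≤ 0 :=
        Finset.sum_nonpos fun u hu => hterm u hu
      rw [Finset.sum_add_distrib] at hsum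
      have := hD v
      simp only [Pi.zero_apply, Pi.le_def] at this ⊢
      omega
    · have hterm : ∀ u ∈ Finset.univ, (E v u : ℤ) * (ind U v - ind U u) ≤ 0 := by
        intro u _
        have hiv : ind U v = 0 := by simp [ind, hv]
        rw [hiv]
        have : ind U u ≥ 0 := by unfold ind; positivity
        have h1 : (0 : ℤ) - ind U u ≤ 0 := by omega
        exact mul_nonpos_of_nonneg_of_nonpos (by positivity) h1
      have hsum : ∑ u, (E v u : ℤ) * (ind U v - ind U u) ≤ 0 :=
        Finset.sum_nonpos fun u hu => hterm u hu
      have hq := hDq v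
      rw [hxeq v] at hq
      simp only [Pi.zero_apply] at hq
      omega
  have hqU : q ∈ U := by
    by_contra hq
    exact hred U hUne hq hfire
  have hxq : x q = 0 := by simpa [hU] using hqU
  refine ⟨hxq, ?_⟩
  have hsum : ∑ u, (E q u : ℤ) * (x q - x u) ≤ 0 := by
    apply Finset.sum_nonpos
    intro u _
    have h2 : (0:ℤ) ≤ x u := hx0 u
    have h1 : x q - x u ≤ 0 := by rw [hxq]; omega
    exact mul_nonpos_of_nonneg_of_nonpos (by positivity) h1
  rw [hxeq q]
  omega
end Gonality
end

section
/- Let R be an X-flap in a connected graph G (the vertex set of a connected component of G - X with N(R) ⊆ X), and let D be an effective divisor of positive rank with X ⊆ supp(D) and R ∩ supp(D) = ∅. Then for any q ∈ R, the set U returned by Dhar's algorithm applied to D and q satisfies U ∩ R = ∅. -/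
open Finset

namespace Gonality

variable {V : Type*}

/-- if `R` is an `X`-flap, `D` a positive rank effective divisor
with `X ⊆ supp(D)` and `R ∩ supp(D) = ∅`, and `q ∈ R`, then the output of
Dhar's algorithm on `(D, q)` is disjoint from `R`. -/
theorem dhar_output_avoids_flap [Fintype V] [DecidableEq V]
    (E : V → V → ℕ) (hsym : ∀ u v, E u v = E v u) (hloop : ∀ v, E v v = 0)
    (hconn : MGConnected E)
    (X R : Finset V)
    -- `R` is the vertex set of a connected component of `G - X`:
    (hRX : Disjoint R X) (hRne : R.Nonempty)
    (hRconn : ∀ u ∈ R, ∀ v ∈ R,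
      Relation.ReflTransGen (fun a b => 0 < E a b ∧ a ∈ R ∧ b ∈ R) u v)
    (hRN : ∀ v ∈ R, ∀ u : V, 0 < E v u → u ∈ R ∨ u ∈ X)
    (D : V → ℤ) (hD : 0 ≤ D)
    -- `D` has positive rank:
    (hrank : ∀ p : V, ∃ y : V → ℤ, 0 ≤ (D - ind {p}) - (lap E).mulVec y)
    (hsupp : ∀ v ∈ X, 1 ≤ D v) (hRsupp : ∀ v ∈ R, D v = 0)
    (q : V) (hq : q ∈ R)
    -- `U` is the output of Dhar's algorithm on `(D, q)`:
    (U : Finset V) (hUq : q ∉ U) (hUfire : Fireable E D U)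
    (hUmax : ∀ W : Finset V, q ∉ W → Fireable E D W → W ⊆ U) :
    U ∩ R = ∅ := by
  classical
  ext v
  simp only [mem_inter, Finset.notMem_empty, iff_false]
  rintro ⟨hvU, hvR⟩
  have key : ∀ a ∈ U, a ∈ R → ∀ b, 0 < E a b → b ∈ U := by
    intro a haU haR b hab
    by_contra hbU
    have h1 := hUfire a haU
    have hDa : D a = 0 := hRsupp a haR
    have h2 : (E a b : ℤ) ≤ outdeg E U a := by
      unfold outdeg
      refine Finset.single_le_sum (f := fun u => (E a u : ℤ)) ?_ ?_
      · intro i _; positivity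
      · simpa using hbU
    omega
  have gen : ∀ w, Relation.ReflTransGen (fun a b => 0 < E a b ∧ a ∈ R ∧ b ∈ R) v w →
      w ∈ U := by
    intro w hw
    induction hw with
    | refl => exact hvU
    | tail hstep hrel ih => exact key _ ih hrel.2.1 _ hrel.1
  exact hUq (gen q (hRconn v hvR q hq))
end Gonality
end

section
/- Ignoring edge orientations, a monotone search strategy for k searchers on a connected graph G yields a tree decomposition of G of width at most k-1, by taking the tree T of the strategy with bag X at each node (X,R). -/
open Finset

namespace Search

variable {V : Type*} [DecidableEq V]

/-- `C` is an `X`-flap: the vertex set of a connected component of `G - X`. -/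
def IsFlap (G : SimpleGraph V) (X C : Finset V) : Prop :=
  C.Nonempty ∧ Disjoint C X ∧
    (∀ u ∈ C, ∀ v ∈ C,
      Relation.ReflTransGen (fun a b => G.Adj a b ∧ a ∈ C ∧ b ∈ C) u v) ∧
    (∀ u ∈ C, ∀ v : V, G.Adj u v → v ∈ C ∨ v ∈ X)

/-- `R` is a union of `X`-flaps. -/
def UnionOfFlaps (G : SimpleGraph V) (X R : Finset V) : Prop :=
  ∀ v ∈ R, ∃ C : Finset V, IsFlap G X C ∧ v ∈ C ∧ C ⊆ R

/-- ignoring orientations, a monotone search strategy for `k`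
searchers on a connected graph `G` yields a tree decomposition of `G` of width
at most `k - 1`, with bag `X` at each node `(X, R)`.  The conclusion states
the three tree-decomposition conditions for the tree of the strategy (adjacency
given by the parent map) together with the bound `|X| ≤ k` on all bags. -/
theorem mss_gives_tree_decomposition {V ι : Type*} [Fintype V] [DecidableEq V]
    [Fintype ι] [DecidableEq ι]
    (G : SimpleGraph V) (hG : G.Connected) (k : ℕ)
    (pos : ι → Finset V × Finset V) (root : ι) (par : ι → ι) (depth : ι → ℕ)
    (hd0 : depth root = 0)
    (hd : ∀ i, i ≠ root → depth i = depth (par i) + 1)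
    (hroot : pos root = (∅, Finset.univ))
    (hinj : Function.Injective pos)
    (hk : ∀ i, (pos i).1.card ≤ k)
    (hflaps : ∀ i, UnionOfFlaps G (pos i).1 (pos i).2)
    -- every leaf has `R = ∅`:
    (hleaf : ∀ i, ¬ (Finset.univ.filter fun j => j ≠ root ∧ par j = i).Nonempty →
      (pos i).2 = ∅)
    (hmoves : ∀ i, (Finset.univ.filter fun j => j ≠ root ∧ par j = i).Nonempty →
      (pos i).2.Nonempty ∧
      ((∃ j, (Finset.univ.filter fun j' => j' ≠ root ∧ par j' = i) = {j} ∧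
          (pos j).1 ⊂ (pos i).1 ∧ (pos j).2 = (pos i).2) ∨
       (∃ j, (Finset.univ.filter fun j' => j' ≠ root ∧ par j' = i) = {j} ∧
          (pos i).1 ⊂ (pos j).1 ∧ (pos j).1 ⊆ (pos i).1 ∪ (pos i).2 ∧
          (pos j).2 = (pos i).2 \ (pos j).1) ∨
       (2 ≤ (Finset.univ.filter fun j' => j' ≠ root ∧ par j' = i).card ∧
        (∀ j ∈ Finset.univ.filter fun j' => j' ≠ root ∧ par j' = i,
          (pos j).1 = (pos i).1 ∧ IsFlap G (pos i).1 (pos j).2 ∧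
            (pos j).2 ⊆ (pos i).2) ∧
        (∀ C : Finset V, IsFlap G (pos i).1 C → C ⊆ (pos i).2 →
          ∃ j ∈ Finset.univ.filter fun j' => j' ≠ root ∧ par j' = i,
            (pos j).2 = C)))) :
    -- the bags `X` on the (undirected) strategy tree form a tree decomposition
    -- of `G` of width at most `k - 1`:
    (∀ v : V, ∃ i, v ∈ (pos i).1) ∧
      (∀ u v : V, G.Adj u v → ∃ i, u ∈ (pos i).1 ∧ v ∈ (pos i).1) ∧
      (∀ (v : V) (i j : ι), v ∈ (pos i).1 → v ∈ (pos j).1 →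
        Relation.ReflTransGen
          (fun a b => (par a = b ∨ par b = a) ∧ v ∈ (pos a).1 ∧ v ∈ (pos b).1) i j) ∧
      (∀ i, (pos i).1.card ≤ k) := by
  classical
  -- `R` is disjoint from `X` at every position
  have hdisj : ∀ i, ∀ v ∈ (pos i).2, v ∉ (pos i).1 := by
    intro i v hv
    obtain ⟨C, hC, hvC, -⟩ := hflaps i v hv
    exact fun hvX => (Finset.disjoint_left.mp hC.2.1) hvC hvX
  -- two flaps sharing a vertex are equal
  have flap_eq : ∀ (Y C1 C2 : Finset V) (v : V), IsFlap G Y C1 → IsFlap G Y C2 →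
      v ∈ C1 → v ∈ C2 → C1 = C2 := by
    have key : ∀ (Y D1 D2 : Finset V) (v : V), IsFlap G Y D1 → IsFlap G Y D2 →
        v ∈ D1 → v ∈ D2 → D1 ⊆ D2 := by
      intro Y D1 D2 v h1 h2 hv1 hv2 u hu
      have hpath := h1.2.2.1 v hv1 u hu
      clear hu
      induction hpath with
      | refl => exact hv2
      | tail hab step ih =>
        rcases h2.2.2.2 _ ih _ step.1 with h | h
        · exact h
        · exact absurd h (fun hh => Finset.disjoint_left.mp h1.2.1 step.2.2 hh)
    intro Y C1 C2 v h1 h2 hv1 hv2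
    exact subset_antisymm (key Y C1 C2 v h1 h2 hv1 hv2) (key Y C2 C1 v h2 h1 hv2 hv1)
  -- membership in children filters
  have hfilmem : ∀ (i j : ι), j ∈ Finset.univ.filter (fun j' => j' ≠ root ∧ par j' = i) →
      j ≠ root ∧ par j = i := by
    intro i j h
    simpa using h
  have hchild : ∀ j, j ≠ root →
      j ∈ Finset.univ.filter (fun j' => j' ≠ root ∧ par j' = par j) := by
    intro j hj
    simp [hj]
  -- basic monotonicity along one edge of the tree
  have hstep : ∀ j, j ≠ root → (pos j).2 ⊆ (pos (par j)).2 ∧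
      (pos j).1 ⊆ (pos (par j)).1 ∪ (pos (par j)).2 := by
    intro j hj
    have hmem := hchild j hj
    rcases (hmoves (par j) ⟨j, hmem⟩).2 with ⟨j0, hfil, hss, hre⟩ | ⟨j0, hfil, hss, hsub, hre⟩ |
      ⟨-, hall, -⟩
    · obtain rfl : j = j0 := Finset.mem_singleton.mp (hfil ▸ hmem)
      exact ⟨le_of_eq hre, hss.subset.trans Finset.subset_union_left⟩
    · obtain rfl : j = j0 := Finset.mem_singleton.mp (hfil ▸ hmem)
      refine ⟨?_, hsub⟩
      rw [hre]
      exact Finset.sdiff_subset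
    · obtain ⟨hXeq, -, hRsub⟩ := hall j hmem
      refine ⟨hRsub, ?_⟩
      rw [hXeq]
      exact Finset.subset_union_left
  -- a vertex of `R p` can be "alive" in at most one child of `p`
  have huniq : ∀ (p : ι) (v : V), v ∈ (pos p).2 → ∀ c1 c2 : ι, c1 ≠ root → c2 ≠ root →
      par c1 = p → par c2 = p → v ∈ (pos c1).1 ∪ (pos c1).2 →
      v ∈ (pos c2).1 ∪ (pos c2).2 → c1 = c2 := by
    intro p v hv c1 c2 h1r h2r hp1 hp2 hv1 hv2
    have hm1 : c1 ∈ Finset.univ.filter (fun j' => j' ≠ root ∧ par j' = p) := by simp [h1r, hp1]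
    have hm2 : c2 ∈ Finset.univ.filter (fun j' => j' ≠ root ∧ par j' = p) := by simp [h2r, hp2]
    rcases (hmoves p ⟨c1, hm1⟩).2 with ⟨j0, hfil, -, -⟩ | ⟨j0, hfil, -, -, -⟩ | ⟨-, hall, -⟩
    · have e1 := Finset.mem_singleton.mp (hfil ▸ hm1)
      have e2 := Finset.mem_singleton.mp (hfil ▸ hm2)
      rw [e1, e2]
    · have e1 := Finset.mem_singleton.mp (hfil ▸ hm1)
      have e2 := Finset.mem_singleton.mp (hfil ▸ hm2)
      rw [e1, e2]
    · obtain ⟨hX1, hf1, -⟩ := hall c1 hm1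
      obtain ⟨hX2, hf2, -⟩ := hall c2 hm2
      have hvnX : v ∉ (pos p).1 := hdisj p v hv
      have hv1' : v ∈ (pos c1).2 := by
        rcases Finset.mem_union.mp hv1 with h | h
        · exact absurd (hX1 ▸ h) hvnX
        · exact h
      have hv2' : v ∈ (pos c2).2 := by
        rcases Finset.mem_union.mp hv2 with h | h
        · exact absurd (hX2 ▸ h) hvnX
        · exact h
      have hR : (pos c1).2 = (pos c2).2 := flap_eq _ _ _ v hf1 hf2 hv1' hv2'
      exact hinj (Prod.ext (hX1.trans hX2.symm) hR)
  -- the measure and its decrease along tree edges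
  set K := Fintype.card V + 1 with hK
  have hXcard : ∀ i : ι, (pos i).1.card < K := fun i =>
    Nat.lt_succ_of_le (Finset.card_le_univ (pos i).1)
  have hcalc : ∀ a b c d : ℕ, a + 1 ≤ b → c < K →
      a * K + c < b * K + d := by
    intro a b c d h1 h2
    calc a * K + c < a * K + K := by omega
      _ = (a + 1) * K := by ring
      _ ≤ b * K := Nat.mul_le_mul h1 le_rfl
      _ ≤ b * K + d := Nat.le_add_right _ _
  have hmdec : ∀ j, j ≠ root →
      (pos j).2.card * K + (pos j).1.card <
        (pos (par j)).2.card * K + (pos (par j)).1.card := by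
    intro j hj
    have hmem := hchild j hj
    rcases (hmoves (par j) ⟨j, hmem⟩).2 with ⟨j0, hfil, hss, hre⟩ | ⟨j0, hfil, hss, hsub, hre⟩ |
      ⟨hcard, hall, -⟩
    · obtain rfl : j = j0 := Finset.mem_singleton.mp (hfil ▸ hmem)
      rw [hre]
      exact Nat.add_lt_add_left (Finset.card_lt_card hss) _
    · obtain rfl : j = j0 := Finset.mem_singleton.mp (hfil ▸ hmem)
      obtain ⟨x, hxj, hxp⟩ := Finset.exists_of_ssubset hss
      have hxR : x ∈ (pos (par j)).2 := by
        rcases Finset.mem_union.mp (hsub hxj) with h | h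
        · exact absurd h hxp
        · exact h
      have hxnot : x ∉ (pos j).2 := by
        rw [hre]
        simp [hxj]
      have hss2 : (pos j).2 ⊂ (pos (par j)).2 := by
        refine (Finset.ssubset_iff_of_subset ?_).mpr ⟨x, hxR, hxnot⟩
        rw [hre]
        exact Finset.sdiff_subset
      exact hcalc _ _ _ _ (Finset.card_lt_card hss2) (hXcard j)
    · obtain ⟨hXeq, hflapj, hRsubj⟩ := hall j hmem
      have hone : 1 < (Finset.univ.filter fun j' => j' ≠ root ∧ par j' = par j).card := by
        omega
      obtain ⟨j2, hmem2, hne2⟩ := Finset.exists_mem_ne hone j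
      obtain ⟨hXeq2, hflap2, hRsub2⟩ := hall j2 hmem2
      obtain ⟨x, hx⟩ := hflap2.1
      have hxp : x ∈ (pos (par j)).2 := hRsub2 hx
      have hxnot : x ∉ (pos j).2 := by
        intro hxj
        have hRR := flap_eq _ _ _ x hflap2 hflapj hx hxj
        exact hne2 (hinj (Prod.ext (hXeq2.trans hXeq.symm) hRR))
      have hss2 : (pos j).2 ⊂ (pos (par j)).2 :=
        (Finset.ssubset_iff_of_subset hRsubj).mpr ⟨x, hxp, hxnot⟩
      exact hcalc _ _ _ _ (Finset.card_lt_card hss2) (hXcard j)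
  have hmdec' : ∀ (i j : ι), j ∈ Finset.univ.filter (fun j' => j' ≠ root ∧ par j' = i) →
      (pos j).2.card * K + (pos j).1.card < (pos i).2.card * K + (pos i).1.card := by
    intro i j h
    obtain ⟨hjr, hjp⟩ := hfilmem i j h
    have := hmdec j hjr
    rwa [hjp] at this
  -- every vertex of `R i` eventually appears in a bag
  have Q : ∀ (N : ℕ) (i : ι), (pos i).2.card * K + (pos i).1.card ≤ N →
      ∀ v : V, v ∈ (pos i).2 → ∃ j, v ∈ (pos j).1 := by
    intro N
    induction N using Nat.strong_induction_on with
    | _ N IH =>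
    intro i hNi v hv
    have hchildne : (Finset.univ.filter fun j' => j' ≠ root ∧ par j' = i).Nonempty := by
      by_contra hno
      rw [hleaf i hno] at hv
      exact absurd hv (Finset.notMem_empty v)
    rcases (hmoves i hchildne).2 with ⟨j0, hfil, hss, hre⟩ | ⟨j0, hfil, hss, hsub, hre⟩ |
      ⟨hcard, hall, hsurj⟩
    · have hlt := hmdec' i j0 (hfil ▸ Finset.mem_singleton_self j0)
      exact IH (N - 1) (by omega) j0 (by omega) v (by rw [hre]; exact hv)
    · have hlt := hmdec' i j0 (hfil ▸ Finset.mem_singleton_self j0)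
      by_cases h1 : v ∈ (pos j0).1
      · exact ⟨j0, h1⟩
      · exact IH (N - 1) (by omega) j0 (by omega) v
          (by rw [hre]; exact Finset.mem_sdiff.mpr ⟨hv, h1⟩)
    · obtain ⟨C, hC, hvC, hCsub⟩ := hflaps i v hv
      obtain ⟨j0, hj0mem, hj0R⟩ := hsurj C hC hCsub
      have hlt := hmdec' i j0 hj0mem
      exact IH (N - 1) (by omega) j0 (by omega) v (by rw [hj0R]; exact hvC)
  -- every edge with an endpoint in `R i` eventually appears inside a bag
  have P : ∀ (N : ℕ) (i : ι), (pos i).2.card * K + (pos i).1.card ≤ N →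
      ∀ u v : V, u ∈ (pos i).2 → G.Adj u v → (v ∈ (pos i).2 ∨ v ∈ (pos i).1) →
      ∃ j, u ∈ (pos j).1 ∧ v ∈ (pos j).1 := by
    intro N
    induction N using Nat.strong_induction_on with
    | _ N IH =>
    intro i hNi u v hu hadj hv
    have hchildne : (Finset.univ.filter fun j' => j' ≠ root ∧ par j' = i).Nonempty := by
      by_contra hno
      rw [hleaf i hno] at hu
      exact absurd hu (Finset.notMem_empty u)
    rcases (hmoves i hchildne).2 with ⟨j0, hfil, hss, hre⟩ | ⟨j0, hfil, hss, hsub, hre⟩ |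
      ⟨hcard, hall, hsurj⟩
    · -- remove searchers
      have hlt := hmdec' i j0 (hfil ▸ Finset.mem_singleton_self j0)
      have huj : u ∈ (pos j0).2 := by rw [hre]; exact hu
      rcases hv with hvR | hvX
      · exact IH (N - 1) (by omega) j0 (by omega) u v huj hadj (Or.inl (by rw [hre]; exact hvR))
      · by_cases hvj : v ∈ (pos j0).1
        · exact IH (N - 1) (by omega) j0 (by omega) u v huj hadj (Or.inr hvj)
        · exfalso
          obtain ⟨C, hC, huC, hCsub⟩ := hflaps j0 u huj
          rcases hC.2.2.2 u huC v hadj with h | h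
          · have hvR : v ∈ (pos i).2 := by rw [← hre]; exact hCsub h
            exact hdisj i v hvR hvX
          · exact hvj h
    · -- add searchers
      have hlt := hmdec' i j0 (hfil ▸ Finset.mem_singleton_self j0)
      by_cases hu1 : u ∈ (pos j0).1
      · by_cases hv1 : v ∈ (pos j0).1
        · exact ⟨j0, hu1, hv1⟩
        · have hvR : v ∈ (pos i).2 := by
            rcases hv with h | h
            · exact h
            · exact absurd (hss.subset h) hv1
          have hvj : v ∈ (pos j0).2 := by
            rw [hre]
            exact Finset.mem_sdiff.mpr ⟨hvR, hv1⟩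
          obtain ⟨j, hja, hjb⟩ := IH (N - 1) (by omega) j0 (by omega) v u hvj hadj.symm
            (Or.inr hu1)
          exact ⟨j, hjb, hja⟩
      · have huj : u ∈ (pos j0).2 := by
          rw [hre]
          exact Finset.mem_sdiff.mpr ⟨hu, hu1⟩
        have hvj : v ∈ (pos j0).2 ∨ v ∈ (pos j0).1 := by
          rcases hv with h | h
          · by_cases hv1 : v ∈ (pos j0).1
            · exact Or.inr hv1
            · exact Or.inl (by rw [hre]; exact Finset.mem_sdiff.mpr ⟨h, hv1⟩)
          · exact Or.inr (hss.subset h)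
        exact IH (N - 1) (by omega) j0 (by omega) u v huj hadj hvj
    · -- branch on flaps
      obtain ⟨C, hC, huC, hCsub⟩ := hflaps i u hu
      obtain ⟨j0, hj0mem, hj0R⟩ := hsurj C hC hCsub
      have hlt := hmdec' i j0 hj0mem
      obtain ⟨hXeq, -, -⟩ := hall j0 hj0mem
      have huj : u ∈ (pos j0).2 := by rw [hj0R]; exact huC
      have hvj : v ∈ (pos j0).2 ∨ v ∈ (pos j0).1 := by
        rcases hv with h | h
        · rcases hC.2.2.2 u huC v hadj with h2 | h2
          · exact Or.inl (by rw [hj0R]; exact h2)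
          · exact absurd h2 (hdisj i v h)
        · exact Or.inr (by rw [hXeq]; exact h)
      exact IH (N - 1) (by omega) j0 (by omega) u v huj hadj hvj
  -- depth lemmas
  have hdzero : ∀ i, depth i = 0 → i = root := by
    intro i h
    by_contra hne
    rw [hd i hne] at h
    omega
  have hiterd : ∀ (t : ℕ) (i : ι), t ≤ depth i → depth (par^[t] i) + t = depth i := by
    intro t
    induction t with
    | zero => intro i _; simp
    | succ t ih =>
      intro i hle
      have hir : i ≠ root := by
        intro h
        rw [h, hd0] at hle
        omega
      have h1 := hd i hir
      rw [Function.iterate_succ_apply]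
      have h2 := ih (par i) (by omega)
      omega
  have hiter_root : ∀ i : ι, par^[depth i] i = root := by
    intro i
    have h := hiterd (depth i) i le_rfl
    exact hdzero _ (by omega)
  have Rup : ∀ (t : ℕ) (q : ι), t ≤ depth q → ∀ v ∈ (pos q).2, v ∈ (pos (par^[t] q)).2 := by
    intro t
    induction t with
    | zero =>
      intro q _ v hv
      simpa using hv
    | succ t ih =>
      intro q hle v hv
      have hqr : q ≠ root := by
        intro h
        rw [h, hd0] at hle
        omega
      rw [Function.iterate_succ_apply]
      exact ih (par q) (by have := hd q hqr; omega) v ((hstep q hqr).1 hv)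
  have Tup : ∀ (t : ℕ) (q : ι), t ≤ depth q → ∀ v : V, v ∈ (pos q).1 ∪ (pos q).2 →
      v ∈ (pos (par^[t] q)).1 ∪ (pos (par^[t] q)).2 := by
    intro t
    induction t with
    | zero =>
      intro q _ v hv
      simpa using hv
    | succ t ih =>
      intro q hle v hv
      have hqr : q ≠ root := by
        intro h
        rw [h, hd0] at hle
        omega
      rw [Function.iterate_succ_apply]
      apply ih (par q) (by have := hd q hqr; omega) v
      rcases Finset.mem_union.mp hv with h | h
      · exact (hstep q hqr).2 h
      · exact Finset.mem_union_right _ ((hstep q hqr).1 h)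
  -- connectivity of the bags containing a fixed vertex
  have conn : ∀ (v : V) (N : ℕ) (i j : ι), depth i + depth j ≤ N →
      v ∈ (pos i).1 → v ∈ (pos j).1 →
      Relation.ReflTransGen
        (fun a b => (par a = b ∨ par b = a) ∧ v ∈ (pos a).1 ∧ v ∈ (pos b).1) i j := by
    intro v N
    induction N using Nat.strong_induction_on with
    | _ N IH =>
    have hsymm : Symmetric
        (fun a b => (par a = b ∨ par b = a) ∧ v ∈ (pos a).1 ∧ v ∈ (pos b).1) :=
      fun a b h => ⟨h.1.symm, h.2.2, h.2.1⟩
    have core : ∀ i j : ι, depth i + depth j ≤ N → depth j ≤ depth i →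
        v ∈ (pos i).1 → v ∈ (pos j).1 →
        Relation.ReflTransGen
          (fun a b => (par a = b ∨ par b = a) ∧ v ∈ (pos a).1 ∧ v ∈ (pos b).1) i j := by
      intro i j hN hord hvi hvj
      by_cases hij : i = j
      · subst hij
        exact Relation.ReflTransGen.refl
      have hir : i ≠ root := by
        intro h
        subst h
        rw [hd0] at hord
        exact hij (hdzero j (by omega)).symm
      have hdp := hd i hir
      by_cases hvp : v ∈ (pos (par i)).1
      · have hstep1 : (par i = par i ∨ par (par i) = i) ∧ v ∈ (pos i).1 ∧ v ∈ (pos (par i)).1 :=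
          ⟨Or.inl rfl, hvi, hvp⟩
        exact Relation.ReflTransGen.head hstep1
          (IH (N - 1) (by omega) (par i) j (by omega) hvp hvj)
      · exfalso
        have hvRp : v ∈ (pos (par i)).2 := by
          rcases Finset.mem_union.mp ((hstep i hir).2 hvi) with h | h
          · exact absurd h hvp
          · exact h
        obtain ⟨d, hdd⟩ : ∃ d, depth i = depth j + d := ⟨depth i - depth j, by omega⟩
        have hda : depth (par^[d] i) + d = depth i := hiterd d i (by omega)
        have hvRa : ∀ _ : d ≠ 0, v ∈ (pos (par^[d] i)).2 := by
          intro h0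
          have h1 : d = (d - 1) + 1 := by omega
          rw [h1, Function.iterate_succ_apply]
          exact Rup (d - 1) (par i) (by omega) v hvRp
        have hva : v ∈ (pos (par^[d] i)).1 ∪ (pos (par^[d] i)).2 := by
          by_cases h0 : d = 0
          · subst h0
            simp only [Function.iterate_zero_apply]
            exact Finset.mem_union_left _ hvi
          · exact Finset.mem_union_right _ (hvRa h0)
        have haj : par^[d] i ≠ j := by
          by_cases h0 : d = 0
          · subst h0
            simp only [Function.iterate_zero_apply]
            exact hij
          · intro h
            exact hdisj _ v (hvRa h0) (h ▸ hvj)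
        have hdaj : depth (par^[d] i) = depth j := by omega
        have hwit : par^[depth j] (par^[d] i) = par^[depth j] j := by
          have h1 : par^[depth j] (par^[d] i) = root := by
            rw [← hdaj]
            exact hiter_root _
          rw [h1, hiter_root j]
        have hSne : ∃ t, par^[t] (par^[d] i) = par^[t] j := ⟨depth j, hwit⟩
        have hspec := Nat.find_spec hSne
        have hn0pos : 1 ≤ Nat.find hSne := by
          rcases Nat.eq_zero_or_pos (Nat.find hSne) with h | h
          · exfalso
            apply haj
            have h2 := hspec
            rw [h] at h2
            simpa using h2
          · exact h
        have hn0le : Nat.find hSne ≤ depth j := Nat.find_min' hSne hwit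
        have hsucc : Nat.find hSne - 1 + 1 = Nat.find hSne := by omega
        have hc12 : par^[Nat.find hSne - 1] (par^[d] i) ≠ par^[Nat.find hSne - 1] j :=
          Nat.find_min hSne (by omega)
        have hpc1 : par (par^[Nat.find hSne - 1] (par^[d] i)) =
            par^[Nat.find hSne] (par^[d] i) := by
          have h := Function.iterate_succ_apply' par (Nat.find hSne - 1) (par^[d] i)
          rw [Nat.succ_eq_add_one, hsucc] at h
          exact h.symm
        have hpc2 : par (par^[Nat.find hSne - 1] j) = par^[Nat.find hSne] (par^[d] i) := by
          have h := Function.iterate_succ_apply' par (Nat.find hSne - 1) j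
          rw [Nat.succ_eq_add_one, hsucc] at h
          exact h.symm.trans hspec.symm
        have hdc1 : depth (par^[Nat.find hSne - 1] (par^[d] i)) + (Nat.find hSne - 1) =
            depth (par^[d] i) := hiterd _ _ (by omega)
        have hdc2 : depth (par^[Nat.find hSne - 1] j) + (Nat.find hSne - 1) = depth j :=
          hiterd _ _ (by omega)
        have hc1r : par^[Nat.find hSne - 1] (par^[d] i) ≠ root := by
          intro h
          rw [h, hd0] at hdc1
          omega
        have hc2r : par^[Nat.find hSne - 1] j ≠ root := by
          intro h
          rw [h, hd0] at hdc2
          omega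
        have hvm : v ∈ (pos (par^[Nat.find hSne] (par^[d] i))).2 := by
          have h1 : Nat.find hSne + d = (Nat.find hSne + d - 1) + 1 := by omega
          rw [← Function.iterate_add_apply, h1, Function.iterate_succ_apply]
          exact Rup _ (par i) (by omega) v hvRp
        have hvc1 := Tup (Nat.find hSne - 1) (par^[d] i) (by omega) v hva
        have hvc2 := Tup (Nat.find hSne - 1) j (by omega) v (Finset.mem_union_left _ hvj)
        exact hc12 (huniq _ v hvm _ _ hc1r hc2r hpc1 hpc2 hvc1 hvc2)
    intro i j hN hvi hvj
    rcases le_total (depth j) (depth i) with h | h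
    · exact core i j hN h hvi hvj
    · exact (@Relation.ReflTransGen.symmetric _ _ ⟨hsymm⟩).symm _ _ (core j i (by omega) h hvj hvi)
  refine ⟨?_, ?_, ?_, hk⟩
  · intro v
    exact Q ((pos root).2.card * K + (pos root).1.card) root le_rfl v (by simp [hroot])
  · intro u v huv
    exact P ((pos root).2.card * K + (pos root).1.card) root le_rfl u v (by simp [hroot]) huv
      (Or.inl (by simp [hroot]))
  · intro v i j hvi hvj
    exact conn v (depth i + depth j) i j le_rfl hvi hvj
end Search
end

section
/- Let G and H be finite loopless multigraphs with H connected and G having at least one edge, and let f: G → H be a finite harmonic morphism. Then f is surjective, and there is a positive integer deg(f) such that for every vertex w of H, Σ_{v: f(v)=w} m_f(v) = deg(f), and for every edge e of H, Σ_{e': f(e')=e} r_f(e') = deg(f). -/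
open Finset
open Classical

/-- a finite harmonic morphism `f : G → H` between finite
loopless multigraphs, with `G` connected with at least one edge and `H`
connected, is surjective and has a well-defined positive degree:
`Σ_{v : f(v) = w} m_f(v)` is the same for all vertices `w` of `H`, and
`Σ_{e' : f(e') = e} r_f(e')` is the same for all edges `e` of `H`.
Multigraphs are modelled by an edge type together with an `ends` map to
unordered pairs of vertices. -/
theorem harmonic_morphism_degree
    {VG EG VH EH : Type*} [Fintype VG] [Fintype EG] [Fintype VH] [Fintype EH]
    (endsG : EG → Sym2 VG) (endsH : EH → Sym2 VH)
    (hloopG : ∀ e, ¬ (endsG e).IsDiag) (hloopH : ∀ e, ¬ (endsH e).IsDiag)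
    (hGconn : ∀ u v : VG, Relation.ReflTransGen (fun a b => ∃ e, endsG e = s(a, b)) u v)
    (hHconn : ∀ u v : VH, Relation.ReflTransGen (fun a b => ∃ e, endsH e = s(a, b)) u v)
    (hGedge : Nonempty EG)
    -- the graph homomorphism `f` with index function `r` and local degrees `m`:
    (fV : VG → VH) (fE : EG → EH)
    (hhom : ∀ e, endsH (fE e) = (endsG e).map fV)
    (r : EG → ℕ) (hr : ∀ e, 0 < r e)
    (m : VG → ℕ)
    -- harmonicity:
    (hharm : ∀ (v : VG) (e : EH), fV v ∈ endsH e →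
      ∑ e' ∈ Finset.univ.filter (fun e' => v ∈ endsG e' ∧ fE e' = e), r e' = m v) :
    Function.Surjective fV ∧ Function.Surjective fE ∧
      ∃ d : ℕ, 0 < d ∧
        (∀ w : VH, ∑ v ∈ Finset.univ.filter (fun v => fV v = w), m v = d) ∧
        (∀ e : EH, ∑ e' ∈ Finset.univ.filter (fun e' => fE e' = e), r e' = d) := by
  classical
  obtain ⟨e0⟩ := hGedge
  have repG : ∀ z : Sym2 VG, ∃ a b, z = s(a, b) := fun z =>
    Sym2.ind (fun a b => ⟨a, b, rfl⟩) z
  have repH : ∀ z : Sym2 VH, ∃ a b, z = s(a, b) := fun z =>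
    Sym2.ind (fun a b => ⟨a, b, rfl⟩) z
  -- every vertex of G is on an edge
  have hGinc : ∀ v : VG, ∃ e, v ∈ endsG e := by
    intro v
    obtain ⟨a0, b0, h0⟩ := repG (endsG e0)
    rcases (hGconn v a0).cases_head with h | ⟨c, ⟨e, he⟩, _⟩
    · exact ⟨e0, by rw [h0, h]; exact Sym2.mem_mk_left _ _⟩
    · exact ⟨e, by rw [he]; exact Sym2.mem_mk_left _ _⟩
  -- key: vertex-fibre sums equal edge-fibre sums over incident edges
  have key : ∀ (w : VH) (e : EH), w ∈ endsH e →
      (∑ v ∈ Finset.univ.filter (fun v => fV v = w), m v)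
      = ∑ e' ∈ Finset.univ.filter (fun e' => fE e' = e), r e' := by
    intro w e hw
    have h1 : (∑ v ∈ Finset.univ.filter (fun v => fV v = w), m v)
        = ∑ v ∈ Finset.univ.filter (fun v => fV v = w),
            ∑ e' ∈ Finset.univ.filter (fun e' => v ∈ endsG e' ∧ fE e' = e), r e' := by
      refine Finset.sum_congr rfl fun v hv => ?_
      rw [Finset.mem_filter] at hv
      exact (hharm v e (hv.2 ▸ hw)).symm
    rw [h1]
    simp only [Finset.sum_filter]
    have h2 : (∑ v : VG, if fV v = w then
          (∑ e' : EG, if v ∈ endsG e' ∧ fE e' = e then r e' else 0) else 0)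
        = ∑ v : VG, ∑ e' : EG,
            if fV v = w then (if v ∈ endsG e' ∧ fE e' = e then r e' else 0) else 0 :=
      Finset.sum_congr rfl fun v _ => by split <;> simp
    rw [h2, Finset.sum_comm]
    refine Finset.sum_congr rfl fun e' _ => ?_
    by_cases hfe : fE e' = e
    · simp only [hfe, and_true, eq_self_iff_true]
      obtain ⟨a, b, hab⟩ := repG (endsG e')
      have hne : a ≠ b := by
        intro h; exact hloopG e' (by rw [hab, h]; exact Sym2.mk_isDiag_iff.mpr rfl)
      have hfne : fV a ≠ fV b := by
        intro h
        apply hloopH (fE e')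
        rw [hhom e', hab, Sym2.map_pair_eq, h]
        exact Sym2.mk_isDiag_iff.mpr rfl
      have hwmem : w ∈ s(fV a, fV b) := by
        have hEq : endsH e = s(fV a, fV b) := by
          rw [← hfe, hhom e', hab, Sym2.map_pair_eq]
        rwa [hEq] at hw
      rw [Sym2.mem_iff] at hwmem
      rcases hwmem with h | h
      · have hv : ∀ v : VG,
            (if fV v = w then (if v ∈ endsG e' then r e' else 0) else 0)
            = if v = a then r e' else 0 := by
          intro v
          by_cases hva : v = a
          · subst hva
            simp [h.symm, hab]
          · rcases eq_or_ne v b with hvb | hvb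
            · subst hvb
              have hnw : ¬ (fV v = w) := fun hh => hfne (h ▸ hh).symm
              simp [hva, hnw]
            · simp [hab, Sym2.mem_iff, hva, hvb]
        rw [Finset.sum_congr rfl fun v _ => hv v]
        simp
      · have hv : ∀ v : VG,
            (if fV v = w then (if v ∈ endsG e' then r e' else 0) else 0)
            = if v = b then r e' else 0 := by
          intro v
          by_cases hvb : v = b
          · subst hvb
            simp [h.symm, hab]
          · rcases eq_or_ne v a with hva | hva
            · subst hva
              have hnw : ¬ (fV v = w) := fun hh => hfne (hh.trans h)
              simp [hvb, hnw]
            · simp [hab, Sym2.mem_iff, hva, hvb]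
        rw [Finset.sum_congr rfl fun v _ => hv v]
        simp
    · simp [hfe]
  -- local degrees are positive
  have mpos : ∀ v, 0 < m v := by
    intro v
    obtain ⟨e', hv⟩ := hGinc v
    have hmem : fV v ∈ endsH (fE e') := by
      rw [hhom]; exact Sym2.mem_map.mpr ⟨v, hv, rfl⟩
    rw [← hharm v (fE e') hmem]
    refine Finset.sum_pos (fun i _ => hr i) ⟨e', ?_⟩
    simp [hv]
  -- vertex-fibre sum is constant along H
  have Sconst : ∀ w w', Relation.ReflTransGen (fun a b => ∃ e, endsH e = s(a, b)) w w' →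
      (∑ v ∈ Finset.univ.filter (fun v => fV v = w), m v)
      = ∑ v ∈ Finset.univ.filter (fun v => fV v = w'), m v := by
    intro w w' h
    induction h with
    | refl => rfl
    | @tail b c hwb hbc ih =>
      obtain ⟨e, he⟩ := hbc
      have h1 := key b e (by rw [he]; exact Sym2.mem_mk_left _ _)
      have h2 := key c e (by rw [he]; exact Sym2.mem_mk_right _ _)
      rw [ih, h1, ← h2]
  obtain ⟨a0, b0, h0⟩ := repG (endsG e0)
  set w0 := fV a0 with hw0
  set d := ∑ v ∈ Finset.univ.filter (fun v => fV v = w0), m v with hd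
  have hvsum : ∀ w : VH, ∑ v ∈ Finset.univ.filter (fun v => fV v = w), m v = d :=
    fun w => Sconst w w0 (hHconn w w0)
  have hdpos : 0 < d := by
    rw [hd]
    refine Finset.sum_pos' (fun i _ => Nat.zero_le _) ⟨a0, ?_, mpos a0⟩
    simp [hw0]
  have hesum : ∀ e : EH, ∑ e' ∈ Finset.univ.filter (fun e' => fE e' = e), r e' = d := by
    intro e
    obtain ⟨x, y, hxy⟩ := repH (endsH e)
    rw [← key x e (by rw [hxy]; exact Sym2.mem_mk_left _ _)]
    exact hvsum x
  refine ⟨?_, ?_, d, hdpos, hvsum, hesum⟩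
  · intro w
    by_contra hc
    push_neg at hc
    have : (Finset.univ.filter (fun v => fV v = w)) = ∅ :=
      Finset.filter_eq_empty_iff.mpr (fun v _ => hc v)
    have h0' := hvsum w
    rw [this, Finset.sum_empty] at h0'
    exact absurd h0'.symm (Nat.pos_iff_ne_zero.mp hdpos)
  · intro e
    by_contra hc
    push_neg at hc
    have : (Finset.univ.filter (fun e' => fE e' = e)) = ∅ :=
      Finset.filter_eq_empty_iff.mpr (fun e' _ => hc e')
    have h0' := hesum e
    rw [this, Finset.sum_empty] at h0'
    exact absurd h0'.symm (Nat.pos_iff_ne_zero.mp hdpos)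
end

section
/- Let G be a connected loopless multigraph with at least one edge, T a tree, and f: G → T a finite harmonic morphism of degree k. Then G has a tree decomposition of width at most k; in particular the treewidth of G is at most k. -/
open Finset
open Classical

/-- `G` has a tree decomposition of width at most `k`: there is a tree `T` with
bags `bag i ⊆ V` such that every vertex is in a bag, both endpoints of every
edge lie in a common bag, for every vertex the set of bags containing it is
connected in `T`, and every bag has at most `k + 1` vertices. -/
def HasTreewidthLE {V : Type*} (G : SimpleGraph V) (k : ℕ) : Prop :=
  ∃ (ι : Type) (T : SimpleGraph ι) (bag : ι → Finset V),
    T.IsTree ∧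
    (∀ v : V, ∃ i, v ∈ bag i) ∧
    (∀ u v : V, G.Adj u v → ∃ i, u ∈ bag i ∧ v ∈ bag i) ∧
    (∀ (v : V) (i j : ι), v ∈ bag i → v ∈ bag j →
      Relation.ReflTransGen (fun a b => T.Adj a b ∧ v ∈ bag a ∧ v ∈ bag b) i j) ∧
    (∀ i, (bag i).card ≤ k + 1)

namespace HarmonicTWAux

lemma hasTreewidthLE_of {V : Type*} (G : SimpleGraph V) (k : ℕ)
    {ι' : Type*} [Fintype ι'] (Tr : SimpleGraph ι') (bag : ι' → Finset V)
    (h1 : Tr.IsTree) (h2 : ∀ v, ∃ i, v ∈ bag i)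
    (h3 : ∀ u v, G.Adj u v → ∃ i, u ∈ bag i ∧ v ∈ bag i)
    (h4 : ∀ v i j, v ∈ bag i → v ∈ bag j →
      Relation.ReflTransGen (fun a b => Tr.Adj a b ∧ v ∈ bag a ∧ v ∈ bag b) i j)
    (h5 : ∀ i, (bag i).card ≤ k + 1) : HasTreewidthLE G k := by
  classical
  set eqv := Fintype.equivFin ι' with heqv
  set T0 : SimpleGraph (Fin (Fintype.card ι')) := SimpleGraph.comap (⇑eqv.symm) Tr with hT0
  have φ : Tr ≃g T0 := by
    refine ⟨eqv, ?_⟩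
    intro a b
    simp [hT0]
  refine ⟨Fin (Fintype.card ι'), T0, fun i => bag (eqv.symm i), ⟨?_, ?_⟩, ?_, ?_, ?_, ?_⟩
  · exact (SimpleGraph.Iso.connected_iff φ).mp h1.isConnected
  · intro v c hc
    exact h1.IsAcyclic (c.map φ.symm.toHom) (hc.map φ.symm.toEquiv.injective)
  · intro v
    obtain ⟨i, hi⟩ := h2 v
    exact ⟨eqv i, by simpa using hi⟩
  · intro u v huv
    obtain ⟨i, hi1, hi2⟩ := h3 u v huv
    exact ⟨eqv i, by simpa using hi1, by simpa using hi2⟩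
  · intro v i j hi hj
    have h := h4 v (eqv.symm i) (eqv.symm j) hi hj
    have key : ∀ a b, (Tr.Adj a b ∧ v ∈ bag a ∧ v ∈ bag b) →
        (T0.Adj (eqv a) (eqv b) ∧ v ∈ bag (eqv.symm (eqv a)) ∧ v ∈ bag (eqv.symm (eqv b))) := by
      intro a b hab
      refine ⟨?_, by simpa using hab.2.1, by simpa using hab.2.2⟩
      simpa [hT0] using hab.1
    have := Relation.ReflTransGen.lift
      (p := fun a b => T0.Adj a b ∧ v ∈ bag (eqv.symm a) ∧ v ∈ bag (eqv.symm b))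
      (fun x => eqv x) key _ _ h
    simpa [Function.onFun] using this
  · intro i
    exact h5 _

end HarmonicTWAux


namespace HarmonicTWAux

variable {VT : Type*} {T : SimpleGraph VT}

noncomputable def ec (e : T.edgeSet) : VT := (Quot.out (e : Sym2 VT)).1
noncomputable def ep (e : T.edgeSet) : VT := (Quot.out (e : Sym2 VT)).2

lemma ec_ep_eq (e : T.edgeSet) : s(ec e, ep e) = (e : Sym2 VT) := Quot.out_eq _

lemma adj_ec_ep (e : T.edgeSet) : T.Adj (ec e) (ep e) := by
  rw [← SimpleGraph.mem_edgeSet, ec_ep_eq]; exact e.2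

lemma ec_ne_ep (e : T.edgeSet) : ec e ≠ ep e := (adj_ec_ep e).ne

lemma mem_ec (e : T.edgeSet) : ec e ∈ (e : Sym2 VT) := by
  rw [← ec_ep_eq]; exact Sym2.mem_mk_left _ _

lemma mem_ep (e : T.edgeSet) : ep e ∈ (e : Sym2 VT) := by
  rw [← ec_ep_eq]; exact Sym2.mem_mk_right _ _

/-- the subdivision relation -/
def R (T : SimpleGraph VT) (n : ℕ) :
    (VT ⊕ (T.edgeSet × Fin n)) → (VT ⊕ (T.edgeSet × Fin n)) → Prop
  | Sum.inl w, Sum.inr q => (w = ep q.1 ∧ (q.2 : ℕ) = 0) ∨ (w = ec q.1 ∧ (q.2 : ℕ) = n - 1)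
  | Sum.inr q, Sum.inr q' => q.1 = q'.1 ∧ (q'.2 : ℕ) = (q.2 : ℕ) + 1
  | _, _ => False

/-- the tree `T` with each edge subdivided into a path with `n` interior nodes -/
def Hu (T : SimpleGraph VT) (n : ℕ) : SimpleGraph (VT ⊕ (T.edgeSet × Fin n)) :=
  SimpleGraph.fromRel (R T n)

lemma R_inl_inl (w w' : VT) (n : ℕ) : ¬ R T n (Sum.inl w) (Sum.inl w') := fun h => h

lemma R_inr_inl (q : T.edgeSet × Fin n) (w : VT) : ¬ R T n (Sum.inr q) (Sum.inl w) := fun h => h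

lemma R_inl_inr (w : VT) (q : T.edgeSet × Fin n) :
    R T n (Sum.inl w) (Sum.inr q) ↔
      ((w = ep q.1 ∧ (q.2 : ℕ) = 0) ∨ (w = ec q.1 ∧ (q.2 : ℕ) = n - 1)) := Iff.rfl

lemma R_inr_inr (q q' : T.edgeSet × Fin n) :
    R T n (Sum.inr q) (Sum.inr q') ↔ (q.1 = q'.1 ∧ (q'.2 : ℕ) = (q.2 : ℕ) + 1) := Iff.rfl

lemma walk_invariant {V : Type*} {G : SimpleGraph V} (σ : V → Prop)
    (h : ∀ x y, G.Adj x y → (σ x → σ y)) {a b : V} (p : G.Walk a b) (ha : σ a) : σ b := by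
  induction p with
  | nil => exact ha
  | cons hadj _ ih => exact ih (h _ _ hadj ha)

lemma not_reachable_of_invariant {V : Type*} {G : SimpleGraph V} (σ : V → Prop)
    (h : ∀ x y, G.Adj x y → (σ x ↔ σ y)) {a b : V} (ha : σ a) (hb : ¬ σ b) :
    ¬ G.Reachable a b := fun hr =>
  hb (hr.elim fun p => walk_invariant σ (fun x y hxy hs => (h x y hxy).mp hs) p ha)

end HarmonicTWAux

namespace HarmonicTWAux

variable {VT : Type*} {T : SimpleGraph VT}

lemma T_bridge (hTac : T.IsAcyclic) (e : T.edgeSet) :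
    ¬ (T \ SimpleGraph.fromEdgeSet {(e : Sym2 VT)}).Reachable (ec e) (ep e) := by
  have h := (SimpleGraph.isAcyclic_iff_forall_adj_isBridge.mp hTac) (adj_ec_ep e)
  rw [SimpleGraph.isBridge_iff] at h
  rw [ec_ep_eq] at h
  exact h

lemma survive (e e' : T.edgeSet) (hne : e' ≠ e) :
    (T \ SimpleGraph.fromEdgeSet {(e : Sym2 VT)}).Adj (ec e') (ep e') := by
  rw [SimpleGraph.sdiff_adj]
  refine ⟨adj_ec_ep e', ?_⟩
  rw [SimpleGraph.fromEdgeSet_adj]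
  rintro ⟨hmem, -⟩
  rw [Set.mem_singleton_iff, ec_ep_eq] at hmem
  exact hne (Subtype.ext hmem)

lemma reach_iff_of_survive (e e' : T.edgeSet) (hne : e' ≠ e) (z : VT) :
    (T \ SimpleGraph.fromEdgeSet {(e : Sym2 VT)}).Reachable z (ec e') ↔
    (T \ SimpleGraph.fromEdgeSet {(e : Sym2 VT)}).Reachable z (ep e') :=
  ⟨fun h => h.trans (survive e e' hne).reachable,
   fun h => h.trans (survive e e' hne).symm.reachable⟩

lemma hu_acyclic (hTac : T.IsAcyclic) (n : ℕ) : (Hu T n).IsAcyclic := by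
  rw [SimpleGraph.isAcyclic_iff_forall_adj_isBridge]
  suffices helper : ∀ x y, R T n x y → (Hu T n).Adj x y →
      ¬ ((Hu T n) \ SimpleGraph.fromEdgeSet {s(x, y)}).Reachable x y by
    intro x y hadj
    rcases (SimpleGraph.fromRel_adj _ _ _).mp hadj with ⟨hne, h | h⟩
    · exact SimpleGraph.isBridge_iff.mpr (helper x y h hadj)
    · rw [Sym2.eq_swap]
      exact SimpleGraph.isBridge_iff.mpr (helper y x h hadj.symm)
  intro x y hR hadj
  have hG' : ∀ u v : VT ⊕ (T.edgeSet × Fin n),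
      ((Hu T n) \ SimpleGraph.fromEdgeSet {s(x, y)}).Adj u v →
        (R T n u v ∨ R T n v u) ∧ s(u, v) ≠ s(x, y) := by
    intro u v h
    rw [SimpleGraph.sdiff_adj] at h
    obtain ⟨h1, h2⟩ := h
    rw [SimpleGraph.fromEdgeSet_adj] at h2
    refine ⟨((SimpleGraph.fromRel_adj _ _ _).mp h1).2, fun hc => h2 ⟨hc, h1.ne⟩⟩
  cases x with
  | inl w =>
    cases y with
    | inl w' => exact absurd hR (R_inl_inl _ _ _)
    | inr q =>
      obtain ⟨e, i⟩ := q
      set D := T \ SimpleGraph.fromEdgeSet {(e : Sym2 VT)} with hD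
      set σ : (VT ⊕ (T.edgeSet × Fin n)) → Prop :=
        Sum.elim (fun w' => D.Reachable w w') (fun q => q.1 ≠ e ∧ D.Reachable w (ep q.1)) with hσ
      have hwcases : (w = ep e ∧ (i : ℕ) = 0) ∨ (w = ec e ∧ (i : ℕ) = n - 1) := hR
      refine not_reachable_of_invariant σ ?_ (SimpleGraph.Reachable.refl w) (by simp [hσ])
      suffices key : ∀ u v, R T n u v → s(u, v) ≠ s(Sum.inl w, Sum.inr (e, i)) → (σ u ↔ σ v) by
        intro u v huv
        obtain ⟨hor, hne⟩ := hG' u v huv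
        rcases hor with h | h
        · exact key u v h hne
        · exact (key v u h (by rwa [Sym2.eq_swap] at hne)).symm
      intro u v huv hne
      cases u with
      | inl w1 =>
        cases v with
        | inl => exact absurd huv (R_inl_inl _ _ _)
        | inr q1 =>
          obtain ⟨e1, l⟩ := q1
          replace huv : (w1 = ep e1 ∧ (l : ℕ) = 0) ∨ (w1 = ec e1 ∧ (l : ℕ) = n - 1) := huv
          by_cases he1 : e1 = e
          · subst he1
            simp only [hσ, Sum.elim_inl, Sum.elim_inr, ne_eq, not_true_eq_false,
              false_and, iff_false]
            rcases huv with ⟨hw1, hl⟩ | ⟨hw1, hl⟩ <;>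
              rcases hwcases with ⟨hw, hi⟩ | ⟨hw, hi⟩ <;> subst hw1 <;>
              first
                | exact absurd (by rw [hw, show l = i from Fin.ext (by omega)]) hne
                | (subst hw; exact fun h => T_bridge hTac e1 h)
                | (subst hw; exact fun h => T_bridge hTac e1 h.symm)
          · simp only [hσ, Sum.elim_inl, Sum.elim_inr, ne_eq, he1, not_false_eq_true, true_and]
            rcases huv with ⟨hw1, -⟩ | ⟨hw1, -⟩
            · rw [hw1]
            · rw [hw1]; exact reach_iff_of_survive e e1 he1 w
      | inr q1 =>
        cases v with
        | inl => exact absurd huv (R_inr_inl _ _)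
        | inr q2 =>
          obtain ⟨e1, l⟩ := q1
          obtain ⟨e2, l'⟩ := q2
          obtain ⟨he12, -⟩ := huv
          cases he12
          simp only [hσ, Sum.elim_inr]
  | inr q =>
    cases y with
    | inl => exact absurd hR (R_inr_inl _ _)
    | inr q' =>
      obtain ⟨e, i⟩ := q
      obtain ⟨e', j⟩ := q'
      replace hR : e = e' ∧ (j : ℕ) = (i : ℕ) + 1 := hR
      obtain ⟨he, hj⟩ := hR
      subst he
      have hjn : (j : ℕ) < n := j.2
      set D := T \ SimpleGraph.fromEdgeSet {(e : Sym2 VT)} with hD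
      set σ : (VT ⊕ (T.edgeSet × Fin n)) → Prop :=
        Sum.elim (fun w' => D.Reachable (ep e) w')
          (fun q => (q.1 = e ∧ (q.2 : ℕ) ≤ (i : ℕ)) ∨ (q.1 ≠ e ∧ D.Reachable (ep e) (ep q.1)))
        with hσ
      refine not_reachable_of_invariant σ ?_ (Or.inl ⟨rfl, le_refl _⟩) (by simp [hσ]; omega)
      suffices key : ∀ u v, R T n u v →
          s(u, v) ≠ s(Sum.inr (e, i), Sum.inr (e, j)) → (σ u ↔ σ v) by
        intro u v huv
        obtain ⟨hor, hne⟩ := hG' u v huv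
        rcases hor with h | h
        · exact key u v h hne
        · exact (key v u h (by rwa [Sym2.eq_swap] at hne)).symm
      intro u v huv hne
      cases u with
      | inl w1 =>
        cases v with
        | inl => exact absurd huv (R_inl_inl _ _ _)
        | inr q1 =>
          obtain ⟨e1, l⟩ := q1
          replace huv : (w1 = ep e1 ∧ (l : ℕ) = 0) ∨ (w1 = ec e1 ∧ (l : ℕ) = n - 1) := huv
          by_cases he1 : e1 = e
          · subst he1
            simp only [hσ, Sum.elim_inl, Sum.elim_inr, ne_eq, not_true_eq_false, false_and,
              or_false, true_and]
            rcases huv with ⟨hw1, hl⟩ | ⟨hw1, hl⟩ <;> subst hw1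
            · exact iff_of_true (SimpleGraph.Reachable.refl _) (by omega)
            · exact iff_of_false (fun h => T_bridge hTac e1 h.symm) (by omega)
          · simp only [hσ, Sum.elim_inl, Sum.elim_inr, he1, false_and, false_or, ne_eq,
              not_false_eq_true, true_and]
            rcases huv with ⟨hw1, -⟩ | ⟨hw1, -⟩
            · rw [hw1]
            · rw [hw1]; exact reach_iff_of_survive e e1 he1 (ep e)
      | inr q1 =>
        cases v with
        | inl => exact absurd huv (R_inr_inl _ _)
        | inr q2 =>
          obtain ⟨e1, l⟩ := q1
          obtain ⟨e2, l'⟩ := q2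
          replace huv : e1 = e2 ∧ (l' : ℕ) = (l : ℕ) + 1 := huv
          obtain ⟨he12, hl'⟩ := huv
          cases he12
          by_cases he1 : e1 = e
          · subst he1
            simp only [hσ, Sum.elim_inr, ne_eq, not_true_eq_false, false_and, or_false, true_and]
            by_cases hli : (l : ℕ) = (i : ℕ)
            · exact absurd (by rw [show l = i from Fin.ext hli,
                show l' = j from Fin.ext (by omega)]) hne
            · constructor <;> intro <;> omega
          · simp only [hσ, Sum.elim_inr, he1, false_and, false_or, ne_eq, not_false_eq_true,
              true_and]

lemma hu_connected (hTc : T.Connected) (n : ℕ) (hn : 0 < n) : (Hu T n).Connected := by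
  have hNE : Nonempty VT := hTc.nonempty
  have to_p : ∀ (e : T.edgeSet) (d : ℕ) (jj : Fin n), (jj : ℕ) = d →
      (Hu T n).Reachable (Sum.inr (e, jj)) (Sum.inl (ep e)) := by
    intro e d
    induction d with
    | zero =>
      intro jj hj
      have hadj : (Hu T n).Adj (Sum.inl (ep e)) (Sum.inr (e, jj)) := by
        rw [Hu, SimpleGraph.fromRel_adj]
        exact ⟨by simp, Or.inl (Or.inl ⟨rfl, hj⟩)⟩
      exact hadj.symm.reachable
    | succ d ih =>
      intro jj hj
      have hd : d < n := by omega
      have hadj : (Hu T n).Adj (Sum.inr (e, (⟨d, hd⟩ : Fin n))) (Sum.inr (e, jj)) := by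
        rw [Hu, SimpleGraph.fromRel_adj]
        refine ⟨?_, Or.inl ⟨rfl, by simp [hj]⟩⟩
        simp only [ne_eq, Sum.inr.injEq, Prod.mk.injEq, true_and]
        intro h
        rw [Fin.ext_iff] at h
        simp at h
        omega
      exact hadj.symm.reachable.trans (ih ⟨d, hd⟩ rfl)
  have step : ∀ w w' : VT, T.Adj w w' → (Hu T n).Reachable (Sum.inl w) (Sum.inl w') := by
    intro w w' hadj
    set e : T.edgeSet := ⟨s(w, w'), hadj⟩ with he
    have adjc : (Hu T n).Adj (Sum.inl (ec e)) (Sum.inr (e, (⟨n - 1, by omega⟩ : Fin n))) := by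
      rw [Hu, SimpleGraph.fromRel_adj]
      exact ⟨by simp, Or.inl (Or.inr ⟨rfl, rfl⟩)⟩
    have hpc' : (Hu T n).Reachable (Sum.inl (ep e)) (Sum.inl (ec e)) :=
      (to_p e (n - 1) ⟨n - 1, by omega⟩ rfl).symm.trans adjc.reachable.symm
    have hee : s(ec e, ep e) = s(w, w') := ec_ep_eq e
    rcases Sym2.eq_iff.mp hee with ⟨h1, h2⟩ | ⟨h1, h2⟩
    · rw [← h1, ← h2]; exact hpc'.symm
    · rw [← h1, ← h2]; exact hpc'
  have inl_inl : ∀ w w' : VT, (Hu T n).Reachable (Sum.inl w) (Sum.inl w') := by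
    intro w w'
    have h := hTc.preconnected w w'
    rw [SimpleGraph.reachable_iff_reflTransGen] at h
    induction h with
    | refl => rfl
    | tail _ h2 ih => exact ih.trans (step _ _ h2)
  have toT : ∀ x : VT ⊕ (T.edgeSet × Fin n), ∃ w, (Hu T n).Reachable x (Sum.inl w) := by
    intro x
    cases x with
    | inl w => exact ⟨w, by rfl⟩
    | inr q => exact ⟨ep q.1, to_p q.1 q.2 q.2 rfl⟩
  haveI : Nonempty (VT ⊕ (T.edgeSet × Fin n)) := ⟨Sum.inl hNE.some⟩
  constructor
  intro x y
  obtain ⟨w, hx⟩ := toT x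
  obtain ⟨w', hy⟩ := toT y
  exact hx.trans ((inl_inl w w').trans hy.symm)

end HarmonicTWAux


/-- if `G` is a connected loopless multigraph with at least one
edge and `f : G → T` is a finite harmonic morphism of degree `k` to a tree `T`,
then (the underlying simple graph of) `G` has a tree decomposition of width at
most `k`; in particular the treewidth of `G` is at most `k`. -/
theorem treewidth_le_of_harmonic_morphism_to_tree
    {VG EG VT : Type*} [Fintype VG] [Fintype EG] [Fintype VT]
    (endsG : EG → Sym2 VG) (hloopG : ∀ e, ¬ (endsG e).IsDiag)
    (hGconn : ∀ u v : VG, Relation.ReflTransGen (fun a b => ∃ e, endsG e = s(a, b)) u v)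
    (hGedge : Nonempty EG)
    (T : SimpleGraph VT) (hT : T.IsTree)
    -- the graph homomorphism: vertices to vertices, edges to edges of `T`
    (fV : VG → VT)
    (hhom : ∀ e : EG, (endsG e).map fV ∈ T.edgeSet)
    (r : EG → ℕ) (hr : ∀ e, 0 < r e)
    (m : VG → ℕ)
    -- harmonicity:
    (hharm : ∀ (v : VG) (e : Sym2 VT), e ∈ T.edgeSet → fV v ∈ e →
      ∑ e' ∈ Finset.univ.filter (fun e' => v ∈ endsG e' ∧ (endsG e').map fV = e), r e'
        = m v)
    -- `f` has degree `k`: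
    (k : ℕ)
    (hdegV : ∀ w : VT, ∑ v ∈ Finset.univ.filter (fun v => fV v = w), m v = k)
    (hdegE : ∀ e ∈ T.edgeSet,
      ∑ e' ∈ Finset.univ.filter (fun e' : EG => (endsG e').map fV = e), r e' = k) :
    HasTreewidthLE (SimpleGraph.fromRel fun a b => ∃ e, endsG e = s(a, b)) k := by
  classical
  open HarmonicTWAux in
  obtain ⟨e0⟩ := hGedge
  have hVG : Nonempty VG := ⟨(Quot.out (endsG e0)).1⟩
  set n := Fintype.card VG with hn
  have hn1 : 0 < n := Fintype.card_pos
  set ord : VG → ℕ := fun v => ((Fintype.equivFin VG) v : ℕ) with horddef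
  have hordlt : ∀ v, ord v < n := fun v => (Fintype.equivFin VG v).2
  have hordinj : ∀ a b : VG, ord a = ord b → a = b := fun a b h =>
    (Fintype.equivFin VG).injective (Fin.ext h)
  -- every vertex is incident to an edge
  have hinc : ∀ v : VG, ∃ e', v ∈ endsG e' := by
    intro v
    have h := hGconn v (Quot.out (endsG e0)).1
    rcases Relation.ReflTransGen.cases_head h with heq | ⟨c, ⟨e', he'⟩, -⟩
    · exact ⟨e0, by rw [heq]; exact Sym2.out_fst_mem _⟩
    · exact ⟨e', by rw [he']; exact Sym2.mem_mk_left _ _⟩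
  -- m v ≥ 1
  have hm1 : ∀ v : VG, 1 ≤ m v := by
    intro v
    obtain ⟨e', hv⟩ := hinc v
    have hte : (endsG e').map fV ∈ T.edgeSet := hhom e'
    have hfv : fV v ∈ (endsG e').map fV := Sym2.mem_map.2 ⟨v, hv, rfl⟩
    have h := hharm v _ hte hfv
    calc 1 ≤ r e' := hr e'
      _ ≤ ∑ x ∈ Finset.univ.filter
            (fun x => v ∈ endsG x ∧ (endsG x).map fV = (endsG e').map fV), r x :=
          Finset.single_le_sum (fun i _ => Nat.zero_le _) (by simp [hv])
      _ = m v := h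
  
  -- every vertex has an edge over each tree edge at its image
  have hover : ∀ (v : VG) (e : T.edgeSet), fV v ∈ (e : Sym2 VT) →
      ∃ e', v ∈ endsG e' ∧ (endsG e').map fV = (e : Sym2 VT) := by
    intro v e hm'
    have h := hharm v e e.2 hm'
    by_contra hno
    push_neg at hno
    have hempty : (Finset.univ.filter
        (fun e' => v ∈ endsG e' ∧ (endsG e').map fV = (e : Sym2 VT))) = ∅ := by
      ext x
      simp only [Finset.mem_filter, Finset.mem_univ, true_and, Finset.notMem_empty, iff_false,
        not_and]
      exact fun hx => hno x hx
    rw [hempty, Finset.sum_empty] at h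
    have := hm1 v
    omega
  -- splitting an edge over a tree edge into its two endpoints
  have hsplit : ∀ (e' : EG) (e : T.edgeSet), (endsG e').map fV = (e : Sym2 VT) →
      ∃ a b, endsG e' = s(a, b) ∧ fV a = HarmonicTWAux.ec e ∧ fV b = HarmonicTWAux.ep e := by
    intro e' e h
    have hab : endsG e' = s((Quot.out (endsG e')).1, (Quot.out (endsG e')).2) :=
      (Quot.out_eq _).symm
    have hmap : s(fV (Quot.out (endsG e')).1, fV (Quot.out (endsG e')).2) = (e : Sym2 VT) := by
      rw [← Sym2.map_pair_eq, ← hab, h]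
    have hkey : s(fV (Quot.out (endsG e')).1, fV (Quot.out (endsG e')).2)
        = s(HarmonicTWAux.ec e, HarmonicTWAux.ep e) :=
      hmap.trans (HarmonicTWAux.ec_ep_eq e).symm
    rcases Sym2.eq_iff.mp hkey with ⟨h1, h2⟩ | ⟨h1, h2⟩
    · exact ⟨_, _, hab, h1, h2⟩
    · exact ⟨_, _, hab.trans Sym2.eq_swap, h2, h1⟩
  -- the `p`-side endpoint of an edge over a tree edge is unique
  have hpu : ∀ (e : T.edgeSet) (e' : EG), (endsG e').map fV = (e : Sym2 VT) →
      ∀ v1 v2, v1 ∈ endsG e' → fV v1 = HarmonicTWAux.ep e →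
        v2 ∈ endsG e' → fV v2 = HarmonicTWAux.ep e → v1 = v2 := by
    intro e e' h v1 v2 h1 hf1 h2 hf2
    obtain ⟨a, b, hab, hfa, hfb⟩ := hsplit e' e h
    rw [hab, Sym2.mem_iff] at h1 h2
    have hv1 : v1 = b := by
      rcases h1 with h1 | h1
      · exact absurd (hfa.symm.trans (h1 ▸ hf1)) (HarmonicTWAux.ec_ne_ep e)
      · exact h1
    have hv2 : v2 = b := by
      rcases h2 with h2 | h2
      · exact absurd (hfa.symm.trans (h2 ▸ hf2)) (HarmonicTWAux.ec_ne_ep e)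
      · exact h2
    rw [hv1, hv2]
  have hcu : ∀ (e : T.edgeSet) (e' : EG), (endsG e').map fV = (e : Sym2 VT) →
      ∀ v1 v2, v1 ∈ endsG e' → fV v1 = HarmonicTWAux.ec e →
        v2 ∈ endsG e' → fV v2 = HarmonicTWAux.ec e → v1 = v2 := by
    intro e e' h v1 v2 h1 hf1 h2 hf2
    obtain ⟨a, b, hab, hfa, hfb⟩ := hsplit e' e h
    rw [hab, Sym2.mem_iff] at h1 h2
    have hv1 : v1 = a := by
      rcases h1 with h1 | h1
      · exact h1
      · exact absurd (hfb.symm.trans (h1 ▸ hf1)) (HarmonicTWAux.ec_ne_ep e).symm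
    have hv2 : v2 = a := by
      rcases h2 with h2 | h2
      · exact h2
      · exact absurd (hfb.symm.trans (h2 ▸ hf2)) (HarmonicTWAux.ec_ne_ep e).symm
    rw [hv1, hv2]
  -- fibers and bags
  set fib : VT → Finset VG := fun w => Finset.univ.filter (fun v => fV v = w) with hfibdef
  set Q : T.edgeSet → ℕ → VG → Prop := fun e j v =>
    ∃ e', v ∈ endsG e' ∧ (endsG e').map fV = (e : Sym2 VT) ∧
      ∃ u, u ∈ endsG e' ∧ fV u = HarmonicTWAux.ec e ∧ j ≤ ord u with hQdef
  set bag0 : (VT ⊕ (T.edgeSet × Fin n)) → Finset VG :=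
    Sum.elim (fun w => fib w)
      (fun q => ((fib (HarmonicTWAux.ec q.1)).filter (fun u => ord u ≤ (q.2 : ℕ))) ∪
        ((fib (HarmonicTWAux.ep q.1)).filter (fun v => Q q.1 (q.2 : ℕ) v))) with hbag0
  have mem_fib : ∀ w v, v ∈ fib w ↔ fV v = w := by
    intro w v; simp [hfibdef]
  have bag_inl : ∀ w v, v ∈ bag0 (Sum.inl w) ↔ fV v = w := by
    intro w v; simp [hbag0, hfibdef]
  have bag_inr : ∀ (e : T.edgeSet) (jj : Fin n) (v : VG),
      v ∈ bag0 (Sum.inr (e, jj)) ↔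
        (fV v = HarmonicTWAux.ec e ∧ ord v ≤ (jj : ℕ)) ∨
        (fV v = HarmonicTWAux.ep e ∧ Q e (jj : ℕ) v) := by
    intro e jj v
    simp [hbag0, hfibdef, Finset.mem_union, Finset.mem_filter]
  -- fibers have size at most k
  have hfibcard : ∀ w, (fib w).card ≤ k := by
    intro w
    calc (fib w).card = ∑ v ∈ fib w, 1 := by rw [Finset.card_eq_sum_ones]
      _ ≤ ∑ v ∈ fib w, m v := Finset.sum_le_sum (fun v _ => hm1 v)
      _ = k := by rw [hfibdef]; exact hdegV w
  -- bags have size at most k + 1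
  have hbagcard : ∀ x, (bag0 x).card ≤ k + 1 := by
    intro x
    cases x with
    | inl w =>
      calc (bag0 (Sum.inl w)).card = (fib w).card := rfl
        _ ≤ k := hfibcard w
        _ ≤ k + 1 := Nat.le_succ k
    | inr q =>
      obtain ⟨e, jj⟩ := q
      set j : ℕ := (jj : ℕ) with hjdef
      set c := HarmonicTWAux.ec e with hcdef
      set p := HarmonicTWAux.ep e with hpdef
      set A := (fib c).filter (fun u => ord u < j) with hA
      set B := (fib c).filter (fun u => ord u = j) with hB
      set C := (fib c).filter (fun u => j ≤ ord u) with hC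
      have hbag0eq : bag0 (Sum.inr (e, jj)) =
          ((fib c).filter (fun u => ord u ≤ j)) ∪ ((fib p).filter (fun v => Q e j v)) := rfl
      have hleft : ((fib c).filter (fun u => ord u ≤ j)) ⊆ A ∪ B := by
        intro u hu
        simp only [Finset.mem_filter, mem_fib] at hu
        simp only [hA, hB, Finset.mem_union, Finset.mem_filter, mem_fib]
        rcases Nat.lt_or_ge (ord u) j with h | h
        · exact Or.inl ⟨hu.1, h⟩
        · exact Or.inr ⟨hu.1, by omega⟩
      have hBcard : B.card ≤ 1 := by
        rw [Finset.card_le_one]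
        intro a ha b hb
        simp only [hB, Finset.mem_filter, mem_fib] at ha hb
        exact hordinj a b (ha.2.trans hb.2.symm)
      have hAcard : A.card ≤ ∑ u ∈ A, m u := by
        rw [Finset.card_eq_sum_ones]
        exact Finset.sum_le_sum (fun u _ => hm1 u)
      -- the right part
      set F : VG → Finset EG := fun u => Finset.univ.filter
        (fun e' => u ∈ endsG e' ∧ (endsG e').map fV = (e : Sym2 VT)) with hF
      have hFm : ∀ u ∈ C, ∑ e' ∈ F u, r e' = m u := by
        intro u hu
        simp only [hC, Finset.mem_filter, mem_fib] at hu
        exact hharm u e e.2 (by rw [hu.1]; exact HarmonicTWAux.mem_ec e)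
      have hdisj : (C : Set VG).PairwiseDisjoint F := by
        intro u1 h1 u2 h2 hne12
        refine Finset.disjoint_left.2 ?_
        intro e' he1 he2
        rw [hF, Finset.mem_filter] at he1 he2
        simp only [Finset.mem_coe, hC, Finset.mem_filter, mem_fib] at h1 h2
        exact hne12 (hcu e e' he1.2.2 u1 u2 he1.2.1 h1.1 he2.2.1 h2.1)
      set g : VG → EG := fun v => if h : Q e j v then h.choose else e0 with hg
      have hgspec : ∀ v, Q e j v → v ∈ endsG (g v) ∧ (endsG (g v)).map fV = (e : Sym2 VT) ∧
          ∃ u, u ∈ endsG (g v) ∧ fV u = c ∧ j ≤ ord u := by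
        intro v hv
        rw [hg]
        simp only [hv, dif_pos]
        exact hv.choose_spec
      have hrightcard : ((fib p).filter (fun v => Q e j v)).card ≤ (C.biUnion F).card := by
        apply Finset.card_le_card_of_injOn g
        · intro v hv
          rw [Finset.mem_coe, Finset.mem_filter] at hv
          obtain ⟨hge, hgm, u, hu1, hu2, hu3⟩ := hgspec v hv.2
          rw [Finset.mem_coe, Finset.mem_biUnion]
          refine ⟨u, ?_, ?_⟩
          · simp only [hC, Finset.mem_filter, mem_fib]
            exact ⟨hu2, hu3⟩
          · rw [hF, Finset.mem_filter]
            exact ⟨Finset.mem_univ _, hu1, hgm⟩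
        · intro v1 hv1 v2 hv2 hgeq
          simp only [Finset.coe_filter, Set.mem_setOf_eq, mem_fib] at hv1 hv2
          obtain ⟨hge1, hgm1, -⟩ := hgspec v1 hv1.2
          obtain ⟨hge2, hgm2, -⟩ := hgspec v2 hv2.2
          rw [hgeq] at hge1
          exact hpu e (g v2) hgm2 v1 v2 hge1 hv1.1 hge2 hv2.1
      have hbiUcard : (C.biUnion F).card ≤ ∑ u ∈ C, m u := by
        calc (C.biUnion F).card = ∑ e' ∈ C.biUnion F, 1 := by rw [Finset.card_eq_sum_ones]
          _ ≤ ∑ e' ∈ C.biUnion F, r e' := Finset.sum_le_sum (fun e' _ => hr e')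
          _ = ∑ u ∈ C, ∑ e' ∈ F u, r e' := Finset.sum_biUnion hdisj
          _ = ∑ u ∈ C, m u := Finset.sum_congr rfl hFm
      have hACfib : ∑ u ∈ A, m u + ∑ u ∈ C, m u ≤ k := by
        have hACdisj : Disjoint A C := by
          rw [Finset.disjoint_left]
          intro a ha hc2
          simp only [hA, Finset.mem_filter, mem_fib] at ha
          simp only [hC, Finset.mem_filter, mem_fib] at hc2
          obtain ⟨-, ha2⟩ := ha
          obtain ⟨-, hc22⟩ := hc2
          omega
        have hsub : A ∪ C ⊆ fib c := by
          apply Finset.union_subset <;> [exact Finset.filter_subset _ _;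
            exact Finset.filter_subset _ _]
        calc ∑ u ∈ A, m u + ∑ u ∈ C, m u = ∑ u ∈ A ∪ C, m u :=
              (Finset.sum_union hACdisj).symm
          _ ≤ ∑ u ∈ fib c, m u := Finset.sum_le_sum_of_subset hsub
          _ = k := by rw [hfibdef]; exact hdegV c
      calc (bag0 (Sum.inr (e, jj))).card
          = (((fib c).filter (fun u => ord u ≤ j)) ∪
              ((fib p).filter (fun v => Q e j v))).card := by rw [hbag0eq]
        _ ≤ ((fib c).filter (fun u => ord u ≤ j)).card +
              ((fib p).filter (fun v => Q e j v)).card := Finset.card_union_le _ _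
        _ ≤ (A ∪ B).card + (C.biUnion F).card :=
              Nat.add_le_add (Finset.card_le_card hleft) hrightcard
        _ ≤ (A.card + B.card) + ∑ u ∈ C, m u :=
              Nat.add_le_add (Finset.card_union_le _ _) hbiUcard
        _ ≤ (∑ u ∈ A, m u + 1) + ∑ u ∈ C, m u := by
              have := hAcard; have := hBcard; omega
        _ ≤ k + 1 := by have := hACfib; omega
  -- adjacency helpers
  have adj_pe : ∀ (e : T.edgeSet) (jj : Fin n), (jj : ℕ) = 0 →
      (HarmonicTWAux.Hu T n).Adj (Sum.inl (HarmonicTWAux.ep e)) (Sum.inr (e, jj)) := by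
    intro e jj hj
    rw [HarmonicTWAux.Hu, SimpleGraph.fromRel_adj]
    exact ⟨by simp, Or.inl (Or.inl ⟨rfl, hj⟩)⟩
  have adj_ce : ∀ (e : T.edgeSet) (jj : Fin n), (jj : ℕ) = n - 1 →
      (HarmonicTWAux.Hu T n).Adj (Sum.inl (HarmonicTWAux.ec e)) (Sum.inr (e, jj)) := by
    intro e jj hj
    rw [HarmonicTWAux.Hu, SimpleGraph.fromRel_adj]
    exact ⟨by simp, Or.inl (Or.inr ⟨rfl, hj⟩)⟩
  have adj_succ : ∀ (e : T.edgeSet) (jj jj' : Fin n), (jj' : ℕ) = (jj : ℕ) + 1 →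
      (HarmonicTWAux.Hu T n).Adj (Sum.inr (e, jj)) (Sum.inr (e, jj')) := by
    intro e jj jj' hj
    rw [HarmonicTWAux.Hu, SimpleGraph.fromRel_adj]
    refine ⟨?_, Or.inl ⟨rfl, hj⟩⟩
    simp only [ne_eq, Sum.inr.injEq, Prod.mk.injEq, true_and]
    intro h
    rw [Fin.ext_iff] at h
    omega
  -- connectivity of the bags of each vertex
  have conn : ∀ (v : VG) (x : VT ⊕ (T.edgeSet × Fin n)), v ∈ bag0 x →
      Relation.ReflTransGen
        (fun a b => (HarmonicTWAux.Hu T n).Adj a b ∧ v ∈ bag0 a ∧ v ∈ bag0 b)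
        x (Sum.inl (fV v)) := by
    intro v x hx
    cases x with
    | inl w =>
      rw [bag_inl] at hx
      rw [← hx]
    | inr q =>
      obtain ⟨e, jj⟩ := q
      rw [bag_inr] at hx
      rcases hx with ⟨hc, hle⟩ | ⟨hp, hQ⟩
      · rw [hc]
        have up : ∀ (d : ℕ) (ll : Fin n), (ll : ℕ) + d = n - 1 → ord v ≤ (ll : ℕ) →
            Relation.ReflTransGen
              (fun a b => (HarmonicTWAux.Hu T n).Adj a b ∧ v ∈ bag0 a ∧ v ∈ bag0 b)
              (Sum.inr (e, ll)) (Sum.inl (HarmonicTWAux.ec e)) := by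
          intro d
          induction d with
          | zero =>
            intro ll h1 h2
            refine Relation.ReflTransGen.single ⟨(adj_ce e ll (by omega)).symm, ?_, ?_⟩
            · rw [bag_inr]; exact Or.inl ⟨hc, h2⟩
            · rw [bag_inl]; exact hc
          | succ d ih =>
            intro ll h1 h2
            have hlt : (ll : ℕ) + 1 < n := by omega
            refine Relation.ReflTransGen.head
              ⟨adj_succ e ll ⟨(ll : ℕ) + 1, hlt⟩ rfl, ?_, ?_⟩ (ih ⟨(ll : ℕ) + 1, hlt⟩ ?_ ?_)
            · rw [bag_inr]; exact Or.inl ⟨hc, h2⟩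
            · rw [bag_inr]; exact Or.inl ⟨hc, by simp; omega⟩
            · simp; omega
            · simp; omega
        exact up (n - 1 - (jj : ℕ)) jj (by have := jj.2; omega) hle
      · rw [hp]
        have down : ∀ (d : ℕ) (ll : Fin n), (ll : ℕ) = d → Q e (ll : ℕ) v →
            Relation.ReflTransGen
              (fun a b => (HarmonicTWAux.Hu T n).Adj a b ∧ v ∈ bag0 a ∧ v ∈ bag0 b)
              (Sum.inr (e, ll)) (Sum.inl (HarmonicTWAux.ep e)) := by
          intro d
          induction d with
          | zero =>
            intro ll h1 h2
            refine Relation.ReflTransGen.single ⟨(adj_pe e ll h1).symm, ?_, ?_⟩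
            · rw [bag_inr]; exact Or.inr ⟨hp, h2⟩
            · rw [bag_inl]; exact hp
          | succ d ih =>
            intro ll h1 h2
            have hlt : d < n := by omega
            have hQd : Q e ((⟨d, hlt⟩ : Fin n) : ℕ) v := by
              obtain ⟨e', ha, hb, u, hu1, hu2, hu3⟩ := h2
              exact ⟨e', ha, hb, u, hu1, hu2, by simp; omega⟩
            refine Relation.ReflTransGen.head
              ⟨(adj_succ e ⟨d, hlt⟩ ll (by simp; omega)).symm, ?_, ?_⟩
              (ih ⟨d, hlt⟩ (by simp) hQd)
            · rw [bag_inr]; exact Or.inr ⟨hp, h2⟩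
            · rw [bag_inr]; exact Or.inr ⟨hp, hQd⟩
        exact down (jj : ℕ) jj rfl hQ
  -- final assembly
  haveI : Fintype ↥(T.edgeSet) := Fintype.ofFinite _
  apply HarmonicTWAux.hasTreewidthLE_of
      (ι' := VT ⊕ (T.edgeSet × Fin n)) _ k (HarmonicTWAux.Hu T n) bag0
  · exact ⟨HarmonicTWAux.hu_connected hT.isConnected n hn1,
      HarmonicTWAux.hu_acyclic hT.IsAcyclic n⟩
  · intro v
    exact ⟨Sum.inl (fV v), (bag_inl _ _).2 rfl⟩
  · -- edges
    have edgecase : ∀ u v : VG, (∃ e', endsG e' = s(u, v)) →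
        ∃ x, u ∈ bag0 x ∧ v ∈ bag0 x := by
      rintro u v ⟨e', he'⟩
      have hte : (endsG e').map fV ∈ T.edgeSet := hhom e'
      obtain ⟨a, b, hab, hfa, hfb⟩ := hsplit e' ⟨(endsG e').map fV, hte⟩ rfl
      have habuv : s(a, b) = s(u, v) := by rw [← hab, he']
      have hmema : a ∈ endsG e' := by rw [hab]; exact Sym2.mem_mk_left _ _
      have hQwit : ∀ z, z ∈ endsG e' → fV z = HarmonicTWAux.ep ⟨(endsG e').map fV, hte⟩ →
          z ∈ bag0 (Sum.inr (⟨(endsG e').map fV, hte⟩, ⟨ord a, hordlt a⟩)) := by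
        intro z hz hfz
        rw [bag_inr]
        exact Or.inr ⟨hfz, e', hz, rfl, a, hmema, hfa, le_refl _⟩
      have hamem : a ∈ bag0 (Sum.inr (⟨(endsG e').map fV, hte⟩, ⟨ord a, hordlt a⟩)) := by
        rw [bag_inr]
        exact Or.inl ⟨hfa, le_refl _⟩
      rcases Sym2.eq_iff.mp habuv with ⟨h1, h2⟩ | ⟨h1, h2⟩
      · refine ⟨Sum.inr (⟨(endsG e').map fV, hte⟩, ⟨ord a, hordlt a⟩), h1 ▸ hamem, ?_⟩
        refine hQwit v ?_ (by rw [← h2]; exact hfb)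
        rw [he']; exact Sym2.mem_mk_right _ _
      · refine ⟨Sum.inr (⟨(endsG e').map fV, hte⟩, ⟨ord a, hordlt a⟩), ?_, h1 ▸ hamem⟩
        refine hQwit u ?_ (by rw [← h2]; exact hfb)
        rw [he']; exact Sym2.mem_mk_left _ _
    intro u v huv
    rw [SimpleGraph.fromRel_adj] at huv
    obtain ⟨hne, h | h⟩ := huv
    · exact edgecase u v h
    · obtain ⟨x, h1, h2⟩ := edgecase v u h
      exact ⟨x, h2, h1⟩
  · -- connectivity
    intro v i j hi hj
    have hsymrel : Symmetric
        (fun a b => (HarmonicTWAux.Hu T n).Adj a b ∧ v ∈ bag0 a ∧ v ∈ bag0 b) :=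
      fun a b h => ⟨h.1.symm, h.2.2, h.2.1⟩
    exact (conn v i hi).trans
      ((@Relation.ReflTransGen.stdSymm _ _ ⟨fun a b h => hsymrel h⟩).symm _ _ (conn v j hj))
  · exact hbagcard
end
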